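/- arXiv:2503.24159 — 7 statements merged into one kernel-verified Lean document; each statement's English description precedes it below -/
import Mathlib

section
/- Let F : ℝ^N → ℝ^N be M-strongly monotone and L-Lipschitz with 0 < M ≤ L < ∞, let S ⊆ ℝ^N be a nonempty closed convex set, and let η ∈ (0, 2M/L²). Then there exists a unique point s* ∈ S satisfying ⟨F(s*), s − s*⟩ ≥ 0 for all s ∈ S, and for every initial point s₀ ∈ ℝ^N the forward-backward iterates s_{k+1} = proj_S(s_k − η F(s_k)) satisfy ‖s_{k+1} − s*‖ ≤ √(1 − η(2M − ηL²)) · ‖s_k − s*‖ for all k ∈ ℕ; since √(1 − η(2M − ηL²)) < 1, the iterates converge linearly to s*. -/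
/-!
The metric projection onto a convex set is characterised by the variational inequality
`⟪x - proj x, w - proj x⟫ ≤ 0` for `w ∈ S`; hence it is nonexpansive, and the solutions of
VI(F, S) are exactly the fixed points of the forward-backward map `T x = proj (x - η F x)`.
Expanding `‖(x - η F x) - (y - η F y)‖²` and using strong monotonicity and the Lipschitz bound
shows that the forward step, and therefore `T`, is Lipschitz with constant
`√(1 - η (2M - η L²))`, which is `< 1` for `0 < η < 2M/L²`. Banach's fixed-point theorem then
gives existence and uniqueness of the solution and linear convergence of the iterates.
-/

open scoped RealInnerProductSpace

section Projection

variable {E : Type*} [NormedAddCommGroup E] [InnerProductSpace ℝ E] {K : Set E}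

theorem inner_sub_nonpos_of_forall_norm_sub_le (hK : Convex ℝ K) {x p : E} (hp : p ∈ K)
    (h : ∀ y ∈ K, ‖x - p‖ ≤ ‖x - y‖) : ∀ w ∈ K, ⟪x - p, w - p⟫ ≤ 0 := by
  have : Nonempty K := ⟨⟨p, hp⟩⟩
  rw [← norm_eq_iInf_iff_real_inner_le_zero hK hp]
  exact le_antisymm (le_ciInf fun y => h y y.2)
    (ciInf_le ⟨0, fun _ ⟨_, hy⟩ => hy ▸ norm_nonneg _⟩ (⟨p, hp⟩ : K))

theorem norm_sub_sq_le_inner_of_inner_nonpos {u v p q : E}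
    (hp : ⟪u - p, q - p⟫ ≤ 0) (hq : ⟪v - q, p - q⟫ ≤ 0) :
    ‖p - q‖ ^ 2 ≤ ⟪u - v, p - q⟫ := by
  have split : ⟪u - v, p - q⟫ = ‖p - q‖ ^ 2 - ⟪u - p, q - p⟫ - ⟪v - q, p - q⟫ := by
    rw [← real_inner_self_eq_norm_sq]
    simp only [inner_sub_left, inner_sub_right, real_inner_comm]
    ring
  linarith

theorem norm_sub_le_of_inner_nonpos {u v p q : E}
    (hp : ⟪u - p, q - p⟫ ≤ 0) (hq : ⟪v - q, p - q⟫ ≤ 0) : ‖p - q‖ ≤ ‖u - v‖ := by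
  have hsq := norm_sub_sq_le_inner_of_inner_nonpos hp hq
  have hcs := real_inner_le_norm (u - v) (p - q)
  nlinarith [norm_nonneg (p - q), norm_nonneg (u - v)]

def IsMetricProjection (K : Set E) (proj : E → E) : Prop :=
  ∀ x, proj x ∈ K ∧ ∀ y ∈ K, ‖x - proj x‖ ≤ ‖x - y‖

namespace IsMetricProjection

variable {proj : E → E}

theorem inner_nonpos (hproj : IsMetricProjection K proj) (hK : Convex ℝ K) (x : E) :
    ∀ w ∈ K, ⟪x - proj x, w - proj x⟫ ≤ 0 :=
  inner_sub_nonpos_of_forall_norm_sub_le hK (hproj x).1 (hproj x).2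

theorem norm_sub_le (hproj : IsMetricProjection K proj) (hK : Convex ℝ K) (u v : E) :
    ‖proj u - proj v‖ ≤ ‖u - v‖ :=
  norm_sub_le_of_inner_nonpos (hproj.inner_nonpos hK u _ (hproj v).1)
    (hproj.inner_nonpos hK v _ (hproj u).1)

theorem eq_of_inner_nonpos (hproj : IsMetricProjection K proj) (hK : Convex ℝ K) {x p : E}
    (hp : p ∈ K) (hx : ∀ w ∈ K, ⟪x - p, w - p⟫ ≤ 0) : proj x = p := by
  have h := norm_sub_le_of_inner_nonpos (hproj.inner_nonpos hK x p hp) (hx _ (hproj x).1)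
  rwa [sub_self, norm_zero, norm_le_zero_iff, sub_eq_zero] at h

end IsMetricProjection

end Projection

section ForwardBackward

variable {E : Type*} [NormedAddCommGroup E] [InnerProductSpace ℝ E] {F : E → E} {M L η : ℝ}

theorem norm_forwardStep_sub_sq_le (hmono : ∀ x y, M * ‖x - y‖ ^ 2 ≤ ⟪F x - F y, x - y⟫)
    (hlip : ∀ x y, ‖F x - F y‖ ≤ L * ‖x - y‖) (hη : 0 ≤ η) (x y : E) :
    ‖(x - η • F x) - (y - η • F y)‖ ^ 2 ≤ (1 - η * (2 * M - η * L ^ 2)) * ‖x - y‖ ^ 2 := by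
  have expand : ‖(x - η • F x) - (y - η • F y)‖ ^ 2 =
      ‖x - y‖ ^ 2 - 2 * η * ⟪F x - F y, x - y⟫ + η ^ 2 * ‖F x - F y‖ ^ 2 := by
    rw [show (x - η • F x) - (y - η • F y) = (x - y) - η • (F x - F y) by
      rw [smul_sub]; abel, norm_sub_sq_real, real_inner_smul_right, norm_smul,
      real_inner_comm, Real.norm_eq_abs, abs_of_nonneg hη]
    ring
  have hlip_sq : ‖F x - F y‖ ^ 2 ≤ L ^ 2 * ‖x - y‖ ^ 2 := by
    rw [← mul_pow]; exact pow_le_pow_left₀ (norm_nonneg _) (hlip x y) 2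
  rw [expand]
  nlinarith [hmono x y, mul_le_mul_of_nonneg_left hlip_sq (sq_nonneg η)]

theorem norm_forwardStep_sub_le (hmono : ∀ x y, M * ‖x - y‖ ^ 2 ≤ ⟪F x - F y, x - y⟫)
    (hlip : ∀ x y, ‖F x - F y‖ ≤ L * ‖x - y‖) (hη : 0 ≤ η) (x y : E) :
    ‖(x - η • F x) - (y - η • F y)‖ ≤ √(1 - η * (2 * M - η * L ^ 2)) * ‖x - y‖ := by
  rw [← Real.sqrt_sq (norm_nonneg (x - y)), ← Real.sqrt_mul' _ (sq_nonneg _),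
    ← Real.sqrt_sq (norm_nonneg (_ - _))]
  exact Real.sqrt_le_sqrt (norm_forwardStep_sub_sq_le hmono hlip hη x y)

theorem sqrt_one_sub_lt_one_of_lt_div (hη : 0 < η) (hη2 : η < 2 * M / L ^ 2) :
    √(1 - η * (2 * M - η * L ^ 2)) < 1 := by
  have hηL : η * L ^ 2 < 2 * M := by
    rcases (sq_nonneg L).eq_or_lt with hL | hL
    · rw [← hL, div_zero] at hη2; linarith
    · rwa [lt_div_iff₀ hL] at hη2
  rw [Real.sqrt_lt' one_pos]
  nlinarith

def forwardBackward (proj F : E → E) (η : ℝ) (x : E) : E := proj (x - η • F x)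

def IsVISolution (F : E → E) (K : Set E) (s : E) : Prop :=
  s ∈ K ∧ ∀ w ∈ K, 0 ≤ ⟪F s, w - s⟫

variable {K : Set E} {proj : E → E}

theorem forwardBackward_eq_self_iff (hproj : IsMetricProjection K proj) (hK : Convex ℝ K)
    (hη : 0 < η) {s : E} : forwardBackward proj F η s = s ↔ IsVISolution F K s := by
  have step (w : E) : ⟪(s - η • F s) - s, w - s⟫ = -(η * ⟪F s, w - s⟫) := by
    rw [sub_sub_cancel_left, inner_neg_left, real_inner_smul_left]
  constructor
  · intro hfix
    have hs : s ∈ K := hfix ▸ (hproj _).1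
    refine ⟨hs, fun w hw => ?_⟩
    have h := hproj.inner_nonpos hK (s - η • F s) w hw
    rw [show proj (s - η • F s) = s from hfix, step] at h
    exact nonneg_of_mul_nonneg_right (by linarith) hη
  · rintro ⟨hs, hsol⟩
    refine hproj.eq_of_inner_nonpos hK hs fun w hw => ?_
    rw [step]
    exact neg_nonpos.2 (mul_nonneg hη.le (hsol w hw))

theorem norm_forwardBackward_sub_le (hproj : IsMetricProjection K proj) (hK : Convex ℝ K)
    (hmono : ∀ x y, M * ‖x - y‖ ^ 2 ≤ ⟪F x - F y, x - y⟫)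
    (hlip : ∀ x y, ‖F x - F y‖ ≤ L * ‖x - y‖) (hη : 0 ≤ η) (x y : E) :
    ‖forwardBackward proj F η x - forwardBackward proj F η y‖ ≤
      √(1 - η * (2 * M - η * L ^ 2)) * ‖x - y‖ :=
  (hproj.norm_sub_le hK _ _).trans (norm_forwardStep_sub_le hmono hlip hη x y)

theorem contractingWith_forwardBackward (hproj : IsMetricProjection K proj)
    (hK : Convex ℝ K) (hmono : ∀ x y, M * ‖x - y‖ ^ 2 ≤ ⟪F x - F y, x - y⟫)
    (hlip : ∀ x y, ‖F x - F y‖ ≤ L * ‖x - y‖) (hη : 0 < η) (hη2 : η < 2 * M / L ^ 2) :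
    ContractingWith ⟨√(1 - η * (2 * M - η * L ^ 2)), Real.sqrt_nonneg _⟩
      (forwardBackward proj F η) :=
  ⟨sqrt_one_sub_lt_one_of_lt_div hη hη2, LipschitzWith.of_dist_le_mul fun x y => by
    rw [dist_eq_norm, dist_eq_norm]
    exact norm_forwardBackward_sub_le hproj hK hmono hlip hη.le x y⟩

end ForwardBackward

theorem stmt0_general {N : ℕ} (F : EuclideanSpace ℝ (Fin N) → EuclideanSpace ℝ (Fin N))
    (M L : ℝ)
    (hmono : ∀ x y, M * ‖x - y‖ ^ 2 ≤ ⟪F x - F y, x - y⟫)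
    (hlip : ∀ x y, ‖F x - F y‖ ≤ L * ‖x - y‖)
    (S : Set (EuclideanSpace ℝ (Fin N)))
    (hScv : Convex ℝ S)
    (η : ℝ) (hη : 0 < η) (hη2 : η < 2 * M / L ^ 2)
    (proj : EuclideanSpace ℝ (Fin N) → EuclideanSpace ℝ (Fin N))
    (hproj : ∀ x, proj x ∈ S ∧ ∀ y ∈ S, ‖x - proj x‖ ≤ ‖x - y‖) :
    ∃ sstar ∈ S,
      (∀ s ∈ S, 0 ≤ ⟪F sstar, s - sstar⟫) ∧
      (∀ s' ∈ S, (∀ s ∈ S, 0 ≤ ⟪F s', s - s'⟫) → s' = sstar) ∧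
      Real.sqrt (1 - η * (2 * M - η * L ^ 2)) < 1 ∧
      ∀ seq : ℕ → EuclideanSpace ℝ (Fin N),
        (∀ k, seq (k + 1) = proj (seq k - η • F (seq k))) →
        (∀ k, ‖seq (k + 1) - sstar‖ ≤
            Real.sqrt (1 - η * (2 * M - η * L ^ 2)) * ‖seq k - sstar‖) ∧
        Filter.Tendsto seq Filter.atTop (nhds sstar) := by
  have hT := contractingWith_forwardBackward hproj hScv hmono hlip hη hη2
  have hfix := hT.fixedPoint_isFixedPt
  set sstar := ContractingWith.fixedPoint _ hT
  have hsol : IsVISolution F S sstar := (forwardBackward_eq_self_iff hproj hScv hη).1 hfix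
  refine ⟨sstar, hsol.1, hsol.2, fun s' hs' hsol' =>
    hT.fixedPoint_unique ((forwardBackward_eq_self_iff hproj hScv hη).2 ⟨hs', hsol'⟩),
    sqrt_one_sub_lt_one_of_lt_div hη hη2, fun seq hseq => ?_⟩
  replace hseq : ∀ k, seq (k + 1) = forwardBackward proj F η (seq k) := hseq
  refine ⟨fun k => ?_, ?_⟩
  · have h := norm_forwardBackward_sub_le hproj hScv hmono hlip hη.le (seq k) sstar
    rwa [hfix.eq, ← hseq k] at h
  · have hiter : seq = fun k => (forwardBackward proj F η)^[k] (seq 0) := by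
      funext k
      induction k with
      | zero => rfl
      | succ k ih => rw [hseq k, ih, Function.iterate_succ_apply']
    rw [hiter]
    exact hT.tendsto_iterate_fixedPoint (seq 0)

/-- Linear convergence of forward-backward splitting to the unique
solution of the variational inequality VI(F, S) for a strongly monotone Lipschitz map. -/
theorem stmt0 {N : ℕ} (F : EuclideanSpace ℝ (Fin N) → EuclideanSpace ℝ (Fin N))
    (M L : ℝ) (hM : 0 < M) (hML : M ≤ L)
    (hmono : ∀ x y, M * ‖x - y‖ ^ 2 ≤ ⟪F x - F y, x - y⟫)
    (hlip : ∀ x y, ‖F x - F y‖ ≤ L * ‖x - y‖)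
    (S : Set (EuclideanSpace ℝ (Fin N))) (hSne : S.Nonempty) (hScl : IsClosed S)
    (hScv : Convex ℝ S)
    (η : ℝ) (hη : 0 < η) (hη2 : η < 2 * M / L ^ 2)
    (proj : EuclideanSpace ℝ (Fin N) → EuclideanSpace ℝ (Fin N))
    (hproj : ∀ x, proj x ∈ S ∧ ∀ y ∈ S, ‖x - proj x‖ ≤ ‖x - y‖) :
    ∃ sstar ∈ S,
      (∀ s ∈ S, 0 ≤ ⟪F sstar, s - sstar⟫) ∧
      (∀ s' ∈ S, (∀ s ∈ S, 0 ≤ ⟪F s', s - s'⟫) → s' = sstar) ∧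
      Real.sqrt (1 - η * (2 * M - η * L ^ 2)) < 1 ∧
      ∀ seq : ℕ → EuclideanSpace ℝ (Fin N),
        (∀ k, seq (k + 1) = proj (seq k - η • F (seq k))) →
        (∀ k, ‖seq (k + 1) - sstar‖ ≤
            Real.sqrt (1 - η * (2 * M - η * L ^ 2)) * ‖seq k - sstar‖) ∧
        Filter.Tendsto seq Filter.atTop (nhds sstar) :=
  stmt0_general F M L hmono hlip S hScv η hη hη2 proj hproj
end

section
/- Let A be a real n × n matrix whose symmetric part satisfies (1/2)(A + Aᵀ) ⪰ μ I_n for some μ ≥ 0, and let B be a real m × m symmetric positive semidefinite matrix with smallest eigenvalue λ_min(B). Then for every real n × m matrix X, the Frobenius inner product satisfies trace((A X B)ᵀ X) ≥ μ · λ_min(B) · ‖X‖_F². Consequently, the linear map X ↦ A X B on n × m real matrices is (μ·λ_min(B))-strongly monotone with respect to the Frobenius inner product. -/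
/-!
With `M = X B Xᵀ`, which is symmetric and positive semidefinite,
`trace ((A X B)ᵀ X) = trace (M A) = trace (M · ½(A + Aᵀ)) ≥ μ · trace M = μ · trace (Xᵀ X B)`
and `trace (Xᵀ X B) ≥ λ_min(B) · trace (Xᵀ X)`. Both inequalities are instances of
`c · trace Q ≤ trace (Q P)` for `Q ⪰ 0` and `P ⪰ c I`, which holds because the trace of a product
of two positive semidefinite matrices is nonnegative (write `P - c I = Cᴴ C` and cycle the trace).
-/

open scoped Matrix

namespace Matrix
open scoped MatrixOrder ComplexOrder

variable {ι 𝕜 : Type*} [Fintype ι] [RCLike 𝕜]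

theorem PosSemidef.trace_mul_nonneg {M N : Matrix ι ι 𝕜} (hM : M.PosSemidef)
    (hN : N.PosSemidef) : 0 ≤ (M * N).trace := by
  classical
  obtain ⟨C, rfl⟩ := CStarAlgebra.nonneg_iff_eq_star_mul_self.mp hN.nonneg
  rw [← mul_assoc, trace_mul_comm, ← mul_assoc]
  exact (hM.mul_mul_conjTranspose_same C).trace_nonneg

theorem PosSemidef.mul_trace_le_trace_mul [DecidableEq ι] {P Q : Matrix ι ι 𝕜} {c : 𝕜}
    (hQ : Q.PosSemidef) (hP : (P - c • 1).PosSemidef) : c * Q.trace ≤ (Q * P).trace := by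
  have h := hQ.trace_mul_nonneg hP
  rwa [mul_sub, trace_sub, Matrix.mul_smul, mul_one, trace_smul, smul_eq_mul, sub_nonneg] at h

theorem IsHermitian.posSemidef_sub_iInf_eigenvalues_smul_one [DecidableEq ι]
    {B : Matrix ι ι 𝕜} (hB : B.IsHermitian) :
    (B - (⨅ i, hB.eigenvalues i) • (1 : Matrix ι ι 𝕜)).PosSemidef := by
  rw [← le_iff, ← Algebra.algebraMap_eq_smul_one, algebraMap_le_iff_le_spectrum hB.isSelfAdjoint,
    hB.spectrum_real_eq_range_eigenvalues]
  rintro _ ⟨i, rfl⟩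
  exact ciInf_le (Set.finite_range _).bddBelow i

theorem IsSymm.trace_mul_transpose {R : Type*} [CommSemiring R] {M : Matrix ι ι R}
    (hM : M.IsSymm) (A : Matrix ι ι R) : (M * Aᵀ).trace = (M * A).trace := by
  rw [← trace_transpose, transpose_mul, transpose_transpose, hM.eq, trace_mul_comm]

theorem IsSymm.trace_mul_half_smul_add_transpose {R : Type*} [Field R] [NeZero (2 : R)]
    {M : Matrix ι ι R} (hM : M.IsSymm) (A : Matrix ι ι R) :
    (M * ((1 / 2 : R) • (A + Aᵀ))).trace = (M * A).trace := by
  rw [Matrix.mul_smul, mul_add, trace_smul, trace_add, hM.trace_mul_transpose, ← two_mul,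
    smul_eq_mul, ← mul_assoc, one_div_mul_cancel two_ne_zero, one_mul]

end Matrix

/-- If the symmetric part of `A` satisfies `(1/2)(A + Aᵀ) ⪰ μ I` with
`μ ≥ 0` and `B` is symmetric positive semidefinite with smallest eigenvalue
`λ_min(B)`, then `trace((A X B)ᵀ X) ≥ μ·λ_min(B)·‖X‖_F²` for every `X`; i.e. the linear
map `X ↦ A X B` is `(μ·λ_min(B))`-strongly monotone for the Frobenius inner product. -/
theorem stmt7 {n m : ℕ} (A : Matrix (Fin n) (Fin n) ℝ) (μ : ℝ) (hμ : 0 ≤ μ)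
    (hA : (((1 : ℝ) / 2) • (A + Aᵀ) - μ • (1 : Matrix (Fin n) (Fin n) ℝ)).PosSemidef)
    (B : Matrix (Fin m) (Fin m) ℝ) (hB : B.PosSemidef)
    (X : Matrix (Fin n) (Fin m) ℝ) :
    μ * (⨅ i, hB.1.eigenvalues i) * Matrix.trace (Xᵀ * X) ≤
      Matrix.trace ((A * X * B)ᵀ * X) := by
  have hBX : (X * B * Xᵀ).PosSemidef := hB.mul_mul_conjTranspose_same X
  have hBX_symm : (X * B * Xᵀ).IsSymm := hBX.1
  have hB_symm : B.IsSymm := hB.1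
  have hB_le : (⨅ i, hB.1.eigenvalues i) * (Xᵀ * X).trace ≤ (Xᵀ * X * B).trace :=
    (Matrix.posSemidef_conjTranspose_mul_self X).mul_trace_le_trace_mul
      hB.1.posSemidef_sub_iInf_eigenvalues_smul_one
  have hA_le : μ * (X * B * Xᵀ).trace ≤ (X * B * Xᵀ * A).trace := by
    simpa only [hBX_symm.trace_mul_half_smul_add_transpose] using hBX.mul_trace_le_trace_mul hA
  calc μ * (⨅ i, hB.1.eigenvalues i) * (Xᵀ * X).trace
      ≤ μ * (Xᵀ * X * B).trace := by rw [mul_assoc]; gcongr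
    _ = μ * (X * B * Xᵀ).trace := by
      rw [Matrix.mul_assoc, Matrix.trace_mul_comm, Matrix.mul_assoc]
    _ ≤ (X * B * Xᵀ * A).trace := hA_le
    _ = (X * B * Xᵀ * Aᵀ).trace := (hBX_symm.trace_mul_transpose A).symm
    _ = ((A * X * B)ᵀ * X).trace := by
      rw [Matrix.transpose_mul, Matrix.transpose_mul, hB_symm.eq, Matrix.trace_mul_comm _ X]
      simp only [Matrix.mul_assoc]
end

section
/- Strong-monotonicity part of the system-level pseudo-gradient bound: let G be a real a × a matrix whose symmetric part satisfies (1/2)(G + Gᵀ) ⪰ μ I_a with μ ≥ 0, let W be a real b × c matrix, and let h be a real a × b matrix. Define the affine map F(Φ) = 2·G·Φ·(W Wᵀ) + h on a × b real matrices. Then F is strongly monotone with modulus 2·μ·λ_min(W Wᵀ) with respect to the Frobenius inner product: for all a × b real matrices Φ, Ψ, ⟨F(Φ) − F(Ψ), Φ − Ψ⟩_F ≥ 2μ·λ_min(W Wᵀ)·‖Φ − Ψ‖_F². (Applied with G = D_Φᵀ H_Φ and W = W_w, when D_Φᵀ H_Φ is symmetric positive semidefinite this modulus equals the paper's M_{F_Φ}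 = 2σ_min(D_Φᵀ H_Φ)σ_min²(W_w).) -/
open scoped Matrix

/-- The Frobenius norm of a real matrix. -/
noncomputable def frobNorm {a b : ℕ} (X : Matrix (Fin a) (Fin b) ℝ) : ℝ :=
  Real.sqrt (Matrix.trace (Xᵀ * X))

/-!
With `X = Φ - Ψ` and `S = W Wᵀ`, the pairing is `2 tr((G X S)ᵀ X) = tr(Xᵀ (G + Gᵀ) X S)`, so only
the symmetric part of `G` enters. Since `tr(A B) ≥ 0` for positive semidefinite `A` and `B`,
the bound `(G + Gᵀ)/2 ⪰ μ I` (conjugated by `X`) gives `tr(Xᵀ (G + Gᵀ) X S) ≥ 2 μ tr(Xᵀ X S)`,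
and `S ⪰ λ_min(S) I` gives `tr(Xᵀ X S) ≥ λ_min(S) ‖X‖_F²`.
-/

namespace Matrix

section RCLike

open scoped ComplexOrder

variable {n 𝕜 : Type*} [Fintype n] [RCLike 𝕜]

open scoped MatrixOrder in
theorem PosSemidef.trace_mul_nonneg_s9 {A B : Matrix n n 𝕜} (hA : A.PosSemidef)
    (hB : B.PosSemidef) : 0 ≤ (A * B).trace := by
  classical
  obtain ⟨C, rfl⟩ := CStarAlgebra.nonneg_iff_eq_star_mul_self.mp hB.nonneg
  rw [star_eq_conjTranspose, ← Matrix.mul_assoc, trace_mul_cycle]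
  exact (hA.mul_mul_conjTranspose_same C).trace_nonneg

theorem PosSemidef.trace_mul_le_trace_mul {A B S : Matrix n n 𝕜} (hAB : (B - A).PosSemidef)
    (hS : S.PosSemidef) : (A * S).trace ≤ (B * S).trace := by
  simpa [Matrix.sub_mul, trace_sub] using hAB.trace_mul_nonneg_s9 hS

open scoped MatrixOrder in
theorem IsHermitian.posSemidef_sub_iInf_eigenvalues_smul_one_s9 [DecidableEq n] {A : Matrix n n 𝕜}
    (hA : A.IsHermitian) : (A - (⨅ i, hA.eigenvalues i) • (1 : Matrix n n 𝕜)).PosSemidef := by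
  rw [← le_iff, ← Algebra.algebraMap_eq_smul_one, algebraMap_le_iff_le_spectrum hA.isSelfAdjoint,
    hA.spectrum_real_eq_range_eigenvalues]
  rintro _ ⟨i, rfl⟩
  exact ciInf_le (Set.finite_range _).bddBelow i

end RCLike

theorem two_mul_trace_transpose_mul_eq_trace_add_transpose {m n R : Type*} [Fintype m] [Fintype n]
    [CommRing R] (G : Matrix m m R) (X : Matrix m n R) {S : Matrix n n R} (hS : Sᵀ = S) :
    2 * ((G * X * S)ᵀ * X).trace = (Xᵀ * (G + Gᵀ) * X * S).trace := by
  have htrans : ((G * X * S)ᵀ * X).trace = (Xᵀ * Gᵀ * X * S).trace := by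
    rw [transpose_mul, transpose_mul, hS, trace_mul_comm _ S]
    simp only [Matrix.mul_assoc]
  have hself : ((G * X * S)ᵀ * X).trace = (Xᵀ * G * X * S).trace := by
    rw [← trace_transpose, transpose_mul, transpose_transpose, Matrix.mul_assoc G,
      ← Matrix.mul_assoc, ← Matrix.mul_assoc]
  rw [Matrix.mul_add, Matrix.add_mul, Matrix.add_mul, trace_add, ← hself, ← htrans, two_mul]

theorem mul_iInf_eigenvalues_mul_trace_le {m n : Type*} [Fintype m] [Fintype n]
    [DecidableEq m] [DecidableEq n] {G : Matrix m m ℝ} {μ : ℝ} (hμ : 0 ≤ μ)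
    (hG : (((1 : ℝ) / 2) • (G + Gᵀ) - μ • (1 : Matrix m m ℝ)).PosSemidef)
    {S : Matrix n n ℝ} (hS : S.PosSemidef) (X : Matrix m n ℝ) :
    μ * (⨅ i, hS.isHermitian.eigenvalues i) * (Xᵀ * X).trace ≤ ((G * X * S)ᵀ * X).trace := by
  have hμS : μ * (Xᵀ * X * S).trace ≤ 1 / 2 * (Xᵀ * (G + Gᵀ) * X * S).trace := by
    have := hG.conjTranspose_mul_mul_same X
    simp only [Matrix.mul_sub, Matrix.sub_mul, Matrix.mul_smul, Matrix.smul_mul,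
      Matrix.mul_one] at this
    simpa [Matrix.smul_mul, Matrix.mul_smul, trace_smul] using this.trace_mul_le_trace_mul hS
  have hEig : (⨅ i, hS.isHermitian.eigenvalues i) * (Xᵀ * X).trace ≤ (Xᵀ * X * S).trace := by
    have := hS.isHermitian.posSemidef_sub_iInf_eigenvalues_smul_one_s9.trace_mul_le_trace_mul
      (posSemidef_conjTranspose_mul_self X)
    simpa [trace_mul_comm S] using this
  have hsymm := two_mul_trace_transpose_mul_eq_trace_add_transpose G X (S := S) hS.isHermitian
  linarith [mul_le_mul_of_nonneg_left hEig hμ]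

end Matrix

open Matrix

theorem frobNorm_sq {a b : ℕ} (X : Matrix (Fin a) (Fin b) ℝ) :
    frobNorm X ^ 2 = (Xᵀ * X).trace :=
  Real.sq_sqrt (posSemidef_conjTranspose_mul_self X).trace_nonneg

/-- If the symmetric part of `G` satisfies `(1/2)(G + Gᵀ) ⪰ μ I` with
`μ ≥ 0`, the affine map `F(Φ) = 2 G Φ (W Wᵀ) + h` is strongly monotone with modulus
`2 μ λ_min(W Wᵀ)` for the Frobenius inner product `⟨X, Y⟩_F = trace(Xᵀ Y)`. -/
theorem stmt9 {a b c : ℕ} (G : Matrix (Fin a) (Fin a) ℝ) (μ : ℝ) (hμ : 0 ≤ μ)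
    (hG : (((1 : ℝ) / 2) • (G + Gᵀ) - μ • (1 : Matrix (Fin a) (Fin a) ℝ)).PosSemidef)
    (W : Matrix (Fin b) (Fin c) ℝ) (hWW : (W * Wᵀ).IsHermitian)
    (h Φ Ψ : Matrix (Fin a) (Fin b) ℝ) :
    2 * μ * (⨅ i, hWW.eigenvalues i) * frobNorm (Φ - Ψ) ^ 2 ≤
      Matrix.trace
        ((((2 : ℝ) • (G * Φ * (W * Wᵀ)) + h) - ((2 : ℝ) • (G * Ψ * (W * Wᵀ)) + h))ᵀ *
          (Φ - Ψ)) := by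
  have hS : (W * Wᵀ).PosSemidef := posSemidef_self_mul_conjTranspose W
  have key := mul_iInf_eigenvalues_mul_trace_le hμ hG hS (Φ - Ψ)
  rw [add_sub_add_right_eq_sub, ← smul_sub, ← Matrix.sub_mul, ← Matrix.mul_sub, transpose_smul,
    smul_mul, trace_smul, smul_eq_mul, frobNorm_sq]
  linarith
end

section
/- Time-domain achievability of system level responses (output feedback): let A ∈ ℝ^{n_x×n_x}, B ∈ ℝ^{n_x×n_u}, C ∈ ℝ^{n_y×n_x}, and let matrix sequences Φ_xx : ℕ → ℝ^{n_x×n_x}, Φ_ux : ℕ → ℝ^{n_u×n_x}, Φ_xy : ℕ → ℝ^{n_x×n_y}, Φ_uy : ℕ → ℝ^{n_u×n_y} satisfy: Φ_xx(0) = 0, Φ_xx(1) = I, Φ_ux(0) = 0, Φ_xy(0) = 0; the primal recursions Φ_xx(n+1) = A·Φ_xx(n) + B·Φ_ux(n) for all n ≥ 1 and Φ_xy(n+1) = A·Φ_xy(n) + B·Φ_uy(n) for all n ≥ 0; and the dual recursions Φ_xx(n+1) = Φ_xx(n)·A + Φ_xy(n)·C for all n ≥ 1 and Φ_ux(n+1)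 = Φ_ux(n)·A + Φ_uy(n)·C for all n ≥ 0. Given arbitrary disturbance sequences δx : ℕ → ℝ^{n_x} and δy : ℕ → ℝ^{n_y}, define the controller internal state ξ : ℕ → ℝ^{n_x} and the closed-loop trajectories x : ℕ → ℝ^{n_x}, u : ℕ → ℝ^{n_u}, y : ℕ → ℝ^{n_y} by: x₀ = 0, ξ₀ = 0, y_t = C x_t + δy_t, ξ_{t+1} = −Σ_{n=0}^{t} Φ_xx(n+2) ξ_{t−n} − Σ_{n=0}^{t} Φ_xy(n+1) y_{t−n}, u_t = Σ_{n=0}^{t} Φ_ux(n+1) ξ_{t−n} + Σ_{n=0}^{t} Φ_uy(n) y_{t−n}, and x_{t+1} = A x_t + δx_t + B u_t. Then for every t ∈ ℕ: x_t = Σ_{n=1}^{t} Φ_xx(n) δx_{t−n} + Σ_{n=1}^{t} Φ_xy(n) δy_{t−n} and u_t = Σ_{n=1}^{t} Φ_ux(n) δx_{t−n} + Σ_{n=0}^{t} Φ_uy(n) δy_{t−n}; that is, the implemented output-feedback controller achieves exactly the prescribed system level responses from the disturbances to the state and input. -/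
open scoped Matrix

/-!
Write `⋆` for causal convolution and `β t = ξ (t + 1)`. The controller equations say exactly
`Φxx ⋆ β + Φxy ⋆ y = 0` and `u = Φux ⋆ β + Φuy ⋆ y`. For `d = β + B u`, the primal recursions
give two expressions for `(Φxx ⋆ d) (t + 1)` which differ by `d t`, so `β = -B u` whatever the
plant does. Hence `u = Φuy ⋆ y - Φux ⋆ (B u)`, and the dual recursion for `Φux` turns
`Φuy ⋆ (C x)` into `Φux ⋆ (x (· + 1) - A x) = Φux ⋆ (δx + B u)`, so `u = Φux ⋆ δx + Φuy ⋆ δy`.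
The state then follows from the primal recursions by induction on time.
-/

open Finset

section CausalConv

variable {R : Type*} [Ring R] {m m' n p : Type*} [Fintype n]

-- The time-domain action of the transfer matrix `∑ₖ K k z⁻ᵏ` on the signal `w`.
def causalConv (K : ℕ → Matrix m n R) (w : ℕ → n → R) (t : ℕ) : m → R :=
  ∑ k ∈ range (t + 1), K k *ᵥ w (t - k)

theorem causalConv_eq_sum_antidiagonal (K : ℕ → Matrix m n R) (w : ℕ → n → R) (t : ℕ) :
    causalConv K w t = ∑ q ∈ antidiagonal t, K q.1 *ᵥ w q.2 :=
  (Nat.sum_antidiagonal_eq_sum_range_succ_mk (fun q => K q.1 *ᵥ w q.2) t).symm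

theorem causalConv_succ (K : ℕ → Matrix m n R) (w : ℕ → n → R) (t : ℕ) :
    causalConv K w (t + 1) = K 0 *ᵥ w (t + 1) + causalConv (fun k => K (k + 1)) w t := by
  simp only [causalConv_eq_sum_antidiagonal, Nat.sum_antidiagonal_succ]

theorem causalConv_succ' (K : ℕ → Matrix m n R) (w : ℕ → n → R) (t : ℕ) :
    causalConv K w (t + 1) = K (t + 1) *ᵥ w 0 + causalConv K (fun s => w (s + 1)) t := by
  simp only [causalConv_eq_sum_antidiagonal, Nat.sum_antidiagonal_succ']

theorem causalConv_succ_of_kernel_zero {K : ℕ → Matrix m n R} (hK0 : K 0 = 0)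
    (w : ℕ → n → R) (t : ℕ) :
    causalConv K w (t + 1) = causalConv (fun k => K (k + 1)) w t := by
  rw [causalConv_succ, hK0, Matrix.zero_mulVec, zero_add]

theorem causalConv_succ_of_signal_zero (K : ℕ → Matrix m n R) {w : ℕ → n → R} (hw0 : w 0 = 0)
    (t : ℕ) : causalConv K w (t + 1) = causalConv K (fun s => w (s + 1)) t := by
  rw [causalConv_succ', hw0, Matrix.mulVec_zero, zero_add]

theorem causalConv_eq_sum_Icc {K : ℕ → Matrix m n R} (hK0 : K 0 = 0) (w : ℕ → n → R) (t : ℕ) :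
    causalConv K w t = ∑ k ∈ Icc 1 t, K k *ᵥ w (t - k) := by
  rw [causalConv, range_eq_Ico, sum_eq_sum_Ico_succ_bot t.succ_pos, hK0, Matrix.zero_mulVec,
    zero_add, zero_add, Nat.succ_eq_add_one, Ico_add_one_right_eq_Icc]

theorem causalConv_add_right (K : ℕ → Matrix m n R) (v w : ℕ → n → R) (t : ℕ) :
    causalConv K (fun s => v s + w s) t = causalConv K v t + causalConv K w t := by
  simp only [causalConv, Matrix.mulVec_add, sum_add_distrib]

theorem causalConv_sub_right (K : ℕ → Matrix m n R) (v w : ℕ → n → R) (t : ℕ) :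
    causalConv K (fun s => v s - w s) t = causalConv K v t - causalConv K w t := by
  simp only [causalConv, Matrix.mulVec_sub, sum_sub_distrib]

theorem causalConv_add_left (K L : ℕ → Matrix m n R) (w : ℕ → n → R) (t : ℕ) :
    causalConv (fun k => K k + L k) w t = causalConv K w t + causalConv L w t := by
  simp only [causalConv, Matrix.add_mulVec, sum_add_distrib]

theorem mulVec_causalConv [Fintype m] (M : Matrix m' m R) (K : ℕ → Matrix m n R)
    (w : ℕ → n → R) (t : ℕ) :
    M *ᵥ causalConv K w t = causalConv (fun k => M * K k) w t := by
  simp only [causalConv, Matrix.mulVec_sum, Matrix.mulVec_mulVec]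

theorem causalConv_mul_right [Fintype p] (K : ℕ → Matrix m n R) (M : Matrix n p R)
    (w : ℕ → p → R) (t : ℕ) :
    causalConv (fun k => K k * M) w t = causalConv K (fun s => M *ᵥ w s) t := by
  simp only [causalConv, Matrix.mulVec_mulVec]

theorem causalConv_neg_right (K : ℕ → Matrix m n R) (w : ℕ → n → R) (t : ℕ) :
    causalConv K (fun s => -w s) t = -causalConv K w t := by
  simp only [causalConv, Matrix.mulVec_neg, sum_neg_distrib]

theorem causalConv_ite_zero (J : Matrix m n R) (w : ℕ → n → R) (t : ℕ) :
    causalConv (fun k => if k = 0 then J else 0) w t = J *ᵥ w t := by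
  simp [causalConv, sum_range_succ']

theorem causalConv_succ_of_succ_eq [Fintype m] [Fintype p] {K : ℕ → Matrix n m R}
    {L : ℕ → Matrix p m R} {M : Matrix n n R} {N : Matrix n p R} (hK0 : K 0 = 0)
    (h : ∀ k, K (k + 1) = M * K k + N * L k) (w : ℕ → m → R) (t : ℕ) :
    causalConv K w (t + 1) = M *ᵥ causalConv K w t + N *ᵥ causalConv L w t := by
  rw [causalConv_succ_of_kernel_zero hK0]
  simp only [h, causalConv_add_left, mulVec_causalConv]

theorem causalConv_succ_of_succ_eq_add_ite [DecidableEq n] [Fintype p] {K : ℕ → Matrix n n R}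
    {L : ℕ → Matrix p n R} {M : Matrix n n R} {N : Matrix n p R} (hK0 : K 0 = 0)
    (h : ∀ k, K (k + 1) = M * K k + N * L k + if k = 0 then 1 else 0) (w : ℕ → n → R) (t : ℕ) :
    causalConv K w (t + 1) = M *ᵥ causalConv K w t + N *ᵥ causalConv L w t + w t := by
  rw [causalConv_succ_of_kernel_zero hK0]
  simp only [h, causalConv_add_left, mulVec_causalConv, causalConv_ite_zero,
    Matrix.one_mulVec]

theorem causalConv_mulVec_of_succ_eq [Fintype p] {K : ℕ → Matrix m n R} {L : ℕ → Matrix m p R}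
    {M : Matrix n n R} {N : Matrix p n R} (hK0 : K 0 = 0)
    (h : ∀ k, K (k + 1) = K k * M + L k * N) {v : ℕ → n → R} (hv0 : v 0 = 0) (t : ℕ) :
    causalConv L (fun s => N *ᵥ v s) t = causalConv K (fun s => v (s + 1) - M *ᵥ v s) t := by
  have hshift := causalConv_succ_of_kernel_zero hK0 v t
  rw [causalConv_succ_of_signal_zero K hv0] at hshift
  simp only [h, causalConv_add_left, causalConv_mul_right] at hshift
  rw [causalConv_sub_right, hshift]
  abel

theorem succ_eq_add_ite_of_one_le [DecidableEq n] [Fintype p] {K : ℕ → Matrix n n R}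
    {L : ℕ → Matrix p n R} {M : Matrix n n R} {N : Matrix n p R} (hK0 : K 0 = 0)
    (hK1 : K 1 = 1) (hL0 : L 0 = 0) (h : ∀ k, 1 ≤ k → K (k + 1) = M * K k + N * L k) (k : ℕ) :
    K (k + 1) = M * K k + N * L k + if k = 0 then 1 else 0 := by
  cases k with
  | zero => simp [hK0, hK1, hL0]
  | succ k => simp [h (k + 1) le_add_self]

theorem causalConv_shift_add_causalConv_eq_zero [DecidableEq n] [Fintype p]
    {K : ℕ → Matrix n n R} {L : ℕ → Matrix n p R} {ξ : ℕ → n → R} {y : ℕ → p → R}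
    (hK0 : K 0 = 0) (hK1 : K 1 = 1) (hL0 : L 0 = 0) (hξ0 : ξ 0 = 0)
    (hξ : ∀ t, ξ (t + 1) =
      -causalConv (fun k => K (k + 2)) ξ t - causalConv (fun k => L (k + 1)) y t) :
    ∀ t, causalConv K (fun s => ξ (s + 1)) t + causalConv L y t = 0
  | 0 => by simp [causalConv, hK0, hL0]
  | t + 1 => by
    rw [← causalConv_succ_of_signal_zero K hξ0, causalConv_succ_of_kernel_zero hK0,
      causalConv_succ, hK1, Matrix.one_mulVec, causalConv_succ_of_kernel_zero hL0, hξ t]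
    abel

end CausalConv

section SystemLevel

variable {R : Type*} [Ring R] {nx nu ny : Type*} [Fintype nx] [Fintype nu] [Fintype ny]
  {A : Matrix nx nx R} {B : Matrix nx nu R} {C : Matrix ny nx R}
  {Φxx : ℕ → Matrix nx nx R} {Φux : ℕ → Matrix nu nx R}
  {Φxy : ℕ → Matrix nx ny R} {Φuy : ℕ → Matrix nu ny R}

theorem controller_state_eq [DecidableEq nx] (hxx0 : Φxx 0 = 0)
    (hxx : ∀ k, Φxx (k + 1) = A * Φxx k + B * Φux k + if k = 0 then 1 else 0)
    (hxy0 : Φxy 0 = 0) (hxy : ∀ k, Φxy (k + 1) = A * Φxy k + B * Φuy k)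
    {β : ℕ → nx → R} {u : ℕ → nu → R} {y : ℕ → ny → R}
    (hβ : ∀ t, causalConv Φxx β t + causalConv Φxy y t = 0)
    (hu : ∀ t, u t = causalConv Φux β t + causalConv Φuy y t) (t : ℕ) :
    β t = -(B *ᵥ u t) := by
  set d : ℕ → nx → R := fun s => β s + B *ᵥ u s with hd
  have hxx_d : ∀ s, causalConv Φxx d s =
      causalConv Φxx (fun s => B *ᵥ u s) s - causalConv Φxy y s := fun s => by
    rw [hd, causalConv_add_right, eq_neg_of_add_eq_zero_left (hβ s)]
    abel
  have hux_d : ∀ s, causalConv Φux d s =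
      causalConv Φux (fun s => B *ᵥ u s) s + u s - causalConv Φuy y s := fun s => by
    rw [hd, causalConv_add_right, hu s]
    abel
  have hdt : d t = 0 :=
    calc d t = causalConv Φxx d (t + 1) - A *ᵥ causalConv Φxx d t
          - B *ᵥ causalConv Φux d t := by
          rw [causalConv_succ_of_succ_eq_add_ite hxx0 hxx]
          abel
      _ = 0 := by
          rw [hxx_d, hxx_d, hux_d, causalConv_succ_of_succ_eq_add_ite hxx0 hxx,
            causalConv_succ_of_succ_eq hxy0 hxy]
          simp only [Matrix.mulVec_add, Matrix.mulVec_sub]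
          abel
  exact eq_neg_of_add_eq_zero_left hdt

theorem input_eq_causalConv (hux0 : Φux 0 = 0)
    (hdual : ∀ k, Φux (k + 1) = Φux k * A + Φuy k * C)
    {x : ℕ → nx → R} {u : ℕ → nu → R} {y : ℕ → ny → R} {δx : ℕ → nx → R} {δy : ℕ → ny → R}
    (hx0 : x 0 = 0) (hxdyn : ∀ t, x (t + 1) = A *ᵥ x t + δx t + B *ᵥ u t)
    (hy : ∀ t, y t = C *ᵥ x t + δy t)
    (hu : ∀ t, u t = causalConv Φuy y t - causalConv Φux (fun s => B *ᵥ u s) t) (t : ℕ) :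
    u t = causalConv Φux δx t + causalConv Φuy δy t := by
  have hCx : causalConv Φuy (fun s => C *ᵥ x s) t =
      causalConv Φux δx t + causalConv Φux (fun s => B *ᵥ u s) t := by
    rw [causalConv_mulVec_of_succ_eq hux0 hdual hx0, ← causalConv_add_right]
    simp only [hxdyn, add_sub_cancel_left, add_assoc]
  rw [hu t, show y = fun s => C *ᵥ x s + δy s from funext hy, causalConv_add_right, hCx]
  abel

theorem state_eq_causalConv [DecidableEq nx] (hxx0 : Φxx 0 = 0)
    (hxx : ∀ k, Φxx (k + 1) = A * Φxx k + B * Φux k + if k = 0 then 1 else 0)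
    (hxy0 : Φxy 0 = 0) (hxy : ∀ k, Φxy (k + 1) = A * Φxy k + B * Φuy k)
    {x : ℕ → nx → R} {u : ℕ → nu → R} {δx : ℕ → nx → R} {δy : ℕ → ny → R}
    (hx0 : x 0 = 0) (hxdyn : ∀ t, x (t + 1) = A *ᵥ x t + δx t + B *ᵥ u t)
    (hu : ∀ t, u t = causalConv Φux δx t + causalConv Φuy δy t) :
    ∀ t, x t = causalConv Φxx δx t + causalConv Φxy δy t
  | 0 => by simp [causalConv, hx0, hxx0, hxy0]
  | t + 1 => by
    rw [hxdyn, state_eq_causalConv hxx0 hxx hxy0 hxy hx0 hxdyn hu t, hu,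
      causalConv_succ_of_succ_eq_add_ite hxx0 hxx, causalConv_succ_of_succ_eq hxy0 hxy,
      Matrix.mulVec_add, Matrix.mulVec_add]
    abel

end SystemLevel

theorem stmt11_general {nx nu ny : ℕ}
    (A : Matrix (Fin nx) (Fin nx) ℝ) (B : Matrix (Fin nx) (Fin nu) ℝ)
    (C : Matrix (Fin ny) (Fin nx) ℝ)
    (Φxx : ℕ → Matrix (Fin nx) (Fin nx) ℝ) (Φux : ℕ → Matrix (Fin nu) (Fin nx) ℝ)
    (Φxy : ℕ → Matrix (Fin nx) (Fin ny) ℝ) (Φuy : ℕ → Matrix (Fin nu) (Fin ny) ℝ)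
    (hxx0 : Φxx 0 = 0) (hxx1 : Φxx 1 = 1) (hux0 : Φux 0 = 0) (hxy0 : Φxy 0 = 0)
    (hprimal_x : ∀ n, 1 ≤ n → Φxx (n + 1) = A * Φxx n + B * Φux n)
    (hprimal_y : ∀ n, Φxy (n + 1) = A * Φxy n + B * Φuy n)
    (hdual_u : ∀ n, Φux (n + 1) = Φux n * A + Φuy n * C)
    (δx : ℕ → Fin nx → ℝ) (δy : ℕ → Fin ny → ℝ)
    (x ξ : ℕ → Fin nx → ℝ) (u : ℕ → Fin nu → ℝ) (y : ℕ → Fin ny → ℝ)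
    (hx0 : x 0 = 0) (hξ0 : ξ 0 = 0)
    (hy : ∀ t, y t = C.mulVec (x t) + δy t)
    (hξ : ∀ t, ξ (t + 1) =
      -(∑ n ∈ Finset.range (t + 1), (Φxx (n + 2)).mulVec (ξ (t - n))) -
        ∑ n ∈ Finset.range (t + 1), (Φxy (n + 1)).mulVec (y (t - n)))
    (hu : ∀ t, u t =
      (∑ n ∈ Finset.range (t + 1), (Φux (n + 1)).mulVec (ξ (t - n))) +
        ∑ n ∈ Finset.range (t + 1), (Φuy n).mulVec (y (t - n)))
    (hxdyn : ∀ t, x (t + 1) = A.mulVec (x t) + δx t + B.mulVec (u t)) :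
    ∀ t, x t = (∑ n ∈ Finset.Icc 1 t, (Φxx n).mulVec (δx (t - n))) +
          ∑ n ∈ Finset.Icc 1 t, (Φxy n).mulVec (δy (t - n)) ∧
        u t = (∑ n ∈ Finset.Icc 1 t, (Φux n).mulVec (δx (t - n))) +
          ∑ n ∈ Finset.range (t + 1), (Φuy n).mulVec (δy (t - n)) := by
  have hxx := succ_eq_add_ite_of_one_le hxx0 hxx1 hux0 hprimal_x
  have hβ := causalConv_shift_add_causalConv_eq_zero hxx0 hxx1 hxy0 hξ0 hξ
  have hu_β : ∀ t, u t = causalConv Φux (fun s => ξ (s + 1)) t + causalConv Φuy y t := by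
    intro t
    rw [← causalConv_succ_of_signal_zero Φux hξ0, causalConv_succ_of_kernel_zero hux0]
    exact hu t
  have hβu := controller_state_eq hxx0 hxx hxy0 hprimal_y hβ hu_β
  have hU := input_eq_causalConv hux0 hdual_u hx0 hxdyn hy fun t => by
    simp only [hu_β t, hβu, causalConv_neg_right]
    abel
  have hX := state_eq_causalConv hxx0 hxx hxy0 hprimal_y hx0 hxdyn hU
  exact fun t => ⟨by rw [hX, causalConv_eq_sum_Icc hxx0, causalConv_eq_sum_Icc hxy0],
    by rw [hU, causalConv_eq_sum_Icc hux0, causalConv]⟩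

/-- Time-domain achievability of system level responses (output
feedback): if the kernels `(Φxx, Φux, Φxy, Φuy)` satisfy the primal and dual system
level recursions, then the controller implementation with internal state `ξ` produces
closed-loop trajectories whose state and input are exactly the prescribed convolutions
of the disturbances with the system level responses. -/
theorem stmt11 {nx nu ny : ℕ}
    (A : Matrix (Fin nx) (Fin nx) ℝ) (B : Matrix (Fin nx) (Fin nu) ℝ)
    (C : Matrix (Fin ny) (Fin nx) ℝ)
    (Φxx : ℕ → Matrix (Fin nx) (Fin nx) ℝ) (Φux : ℕ → Matrix (Fin nu) (Fin nx) ℝ)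
    (Φxy : ℕ → Matrix (Fin nx) (Fin ny) ℝ) (Φuy : ℕ → Matrix (Fin nu) (Fin ny) ℝ)
    (hxx0 : Φxx 0 = 0) (hxx1 : Φxx 1 = 1) (hux0 : Φux 0 = 0) (hxy0 : Φxy 0 = 0)
    (hprimal_x : ∀ n, 1 ≤ n → Φxx (n + 1) = A * Φxx n + B * Φux n)
    (hprimal_y : ∀ n, Φxy (n + 1) = A * Φxy n + B * Φuy n)
    (hdual_x : ∀ n, 1 ≤ n → Φxx (n + 1) = Φxx n * A + Φxy n * C)
    (hdual_u : ∀ n, Φux (n + 1) = Φux n * A + Φuy n * C)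
    (δx : ℕ → Fin nx → ℝ) (δy : ℕ → Fin ny → ℝ)
    (x ξ : ℕ → Fin nx → ℝ) (u : ℕ → Fin nu → ℝ) (y : ℕ → Fin ny → ℝ)
    (hx0 : x 0 = 0) (hξ0 : ξ 0 = 0)
    (hy : ∀ t, y t = C.mulVec (x t) + δy t)
    (hξ : ∀ t, ξ (t + 1) =
      -(∑ n ∈ Finset.range (t + 1), (Φxx (n + 2)).mulVec (ξ (t - n))) -
        ∑ n ∈ Finset.range (t + 1), (Φxy (n + 1)).mulVec (y (t - n)))
    (hu : ∀ t, u t =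
      (∑ n ∈ Finset.range (t + 1), (Φux (n + 1)).mulVec (ξ (t - n))) +
        ∑ n ∈ Finset.range (t + 1), (Φuy n).mulVec (y (t - n)))
    (hxdyn : ∀ t, x (t + 1) = A.mulVec (x t) + δx t + B.mulVec (u t)) :
    ∀ t, x t = (∑ n ∈ Finset.Icc 1 t, (Φxx n).mulVec (δx (t - n))) +
          ∑ n ∈ Finset.Icc 1 t, (Φxy n).mulVec (δy (t - n)) ∧
        u t = (∑ n ∈ Finset.Icc 1 t, (Φux n).mulVec (δx (t - n))) +
          ∑ n ∈ Finset.range (t + 1), (Φuy n).mulVec (δy (t - n)) :=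
  stmt11_general A B C Φxx Φux Φxy Φuy hxx0 hxx1 hux0 hxy0 hprimal_x hprimal_y hdual_u δx δy x ξ u y
    hx0 hξ0 hy hξ hu hxdyn
end

section
/- Time-domain necessity of the system level constraints (output feedback): let A ∈ ℝ^{n_x×n_x}, B ∈ ℝ^{n_x×n_u}, C ∈ ℝ^{n_y×n_x}, and let K : ℕ → ℝ^{n_u×n_y} be any causal convolution feedback kernel. Define matrix sequences Φ_xx : ℕ → ℝ^{n_x×n_x}, Φ_ux : ℕ → ℝ^{n_u×n_x}, Φ_xy : ℕ → ℝ^{n_x×n_y}, Φ_uy : ℕ → ℝ^{n_u×n_y} by: Φ_xx(0) = 0, Φ_xx(1) = I, Φ_xy(0) = 0, Φ_ux(0) = 0, Φ_uy(0) = K(0); Φ_ux(n) = Σ_{m=0}^{n−1} K(m)·C·Φ_xx(n−m) for n ≥ 1; Φ_xx(n+1) = A·Φ_xx(n) + B·Φ_ux(n) for n ≥ 1; Φ_uy(n) = K(n) + Σ_{m=0}^{n−1} K(m)·C·Φ_xy(n−m) for n ≥ 1; and Φ_xy(n+1) = A·Φ_xy(n) + B·Φ_uy(n) for n ≥ 0.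 Then: (i) for all disturbance sequences δx : ℕ → ℝ^{n_x}, δy : ℕ → ℝ^{n_y}, the closed-loop trajectories defined by x₀ = 0, y_t = C x_t + δy_t, u_t = Σ_{m=0}^{t} K(m) y_{t−m}, x_{t+1} = A x_t + δx_t + B u_t satisfy x_t = Σ_{n=1}^{t} Φ_xx(n) δx_{t−n} + Σ_{n=1}^{t} Φ_xy(n) δy_{t−n} and u_t = Σ_{n=1}^{t} Φ_ux(n) δx_{t−n} + Σ_{n=0}^{t} Φ_uy(n) δy_{t−n} for every t; and (ii) these kernels also satisfy the dual recursions Φ_xx(n+1) = Φ_xx(n)·A + Φ_xy(n)·C for all n ≥ 1 and Φ_ux(n+1) = Φ_ux(n)·A + Φ_uy(n)·C for all n ≥ 0. -/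
/-!
The closed loop is a pair of convolution equations, `u = K ⋆ (C x + δy)` and
`x (t + 1) = A x t + δx t + B u t`. The responses `x = Φxx ⋆ δx + Φxy ⋆ δy`,
`u = Φux ⋆ δx + Φuy ⋆ δy` satisfy them, by associativity of convolution and the defining
recursions of the kernels, and the closed loop has only one solution because `u t` depends
only on `x 0, …, x t`. The dual recursions follow by strong induction: expanding
`Φux (n + 1) = ∑ K m C Φxx (n + 1 - m)` with the dual recursion of `Φxx` at lower indices
gives that of `Φux` at `n`, and the two together turn the primal recursion for `Φxx (n + 2)`
into the dual one.
-/

open scoped Matrix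

namespace Matrix

open Finset

variable {R : Type*} [Semiring R] {l m n p : Type*}

def convMul [Fintype m] (Φ : ℕ → Matrix l m R) (Ψ : ℕ → Matrix m n R) (t : ℕ) : Matrix l n R :=
  ∑ q ∈ antidiagonal t, Φ q.1 * Ψ q.2

def convMulVec [Fintype n] (Φ : ℕ → Matrix m n R) (w : ℕ → n → R) (t : ℕ) : m → R :=
  ∑ q ∈ antidiagonal t, Φ q.1 *ᵥ w q.2

section convMul

variable [Fintype m] {Φ : ℕ → Matrix l m R} {Ψ Ψ' : ℕ → Matrix m n R}

theorem convMul_apply_zero (Φ : ℕ → Matrix l m R) (Ψ : ℕ → Matrix m n R) :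
    convMul Φ Ψ 0 = Φ 0 * Ψ 0 := by
  simp [convMul]

theorem convMul_eq_sum_range_of_zero (hΨ : Ψ 0 = 0) (t : ℕ) :
    convMul Φ Ψ t = ∑ k ∈ range t, Φ k * Ψ (t - k) := by
  rw [convMul, Nat.sum_antidiagonal_eq_sum_range_succ (fun i j => Φ i * Ψ j), sum_range_succ,
    Nat.sub_self, hΨ, Matrix.mul_zero, add_zero]

theorem convMul_succ_of_zero (hΨ : Ψ 0 = 0) (t : ℕ) :
    convMul Φ Ψ (t + 1) = convMul Φ (fun k => Ψ (k + 1)) t := by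
  rw [convMul, Nat.sum_antidiagonal_succ', hΨ, Matrix.mul_zero, zero_add, convMul]

theorem convMul_congr {t : ℕ} (h : ∀ k ≤ t, Ψ k = Ψ' k) : convMul Φ Ψ t = convMul Φ Ψ' t :=
  sum_congr rfl fun q hq => by rw [h q.2 (HasAntidiagonal.antidiagonal.snd_le hq)]

theorem convMul_add (Φ : ℕ → Matrix l m R) (Ψ Ψ' : ℕ → Matrix m n R) :
    convMul Φ (Ψ + Ψ') = convMul Φ Ψ + convMul Φ Ψ' := by
  ext1 t
  simp only [convMul, Pi.add_apply, Matrix.mul_add, sum_add_distrib]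

theorem convMul_mul [Fintype n] (Φ : ℕ → Matrix l m R) (Ψ : ℕ → Matrix m n R)
    (M : Matrix n p R) (t : ℕ) : convMul Φ Ψ t * M = convMul Φ (fun k => Ψ k * M) t := by
  simp only [convMul, Matrix.sum_mul, Matrix.mul_assoc]

theorem convMul_single_zero [DecidableEq n] (Φ : ℕ → Matrix l m R) (M : Matrix m n R) (t : ℕ) :
    convMul Φ (Pi.single 0 M) t = Φ t * M := by
  rw [convMul, sum_eq_single (t, 0)]
  · simp
  · rintro ⟨i, j⟩ hq hne
    obtain rfl | hj := eq_or_ne j 0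
    · simp_all
    · simp [hj]
  · simp

end convMul

section convMulVec

variable [Fintype n] {Φ : ℕ → Matrix m n R} {v w : ℕ → n → R}

theorem convMulVec_apply_zero (Φ : ℕ → Matrix m n R) (w : ℕ → n → R) :
    convMulVec Φ w 0 = Φ 0 *ᵥ w 0 := by
  simp [convMulVec]

theorem convMulVec_eq_sum_range (Φ : ℕ → Matrix m n R) (w : ℕ → n → R) (t : ℕ) :
    convMulVec Φ w t = ∑ k ∈ range (t + 1), Φ k *ᵥ w (t - k) :=
  Nat.sum_antidiagonal_eq_sum_range_succ (fun i j => Φ i *ᵥ w j) t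

theorem convMulVec_eq_sum_Icc_of_zero (hΦ : Φ 0 = 0) (w : ℕ → n → R) (t : ℕ) :
    convMulVec Φ w t = ∑ k ∈ Icc 1 t, Φ k *ᵥ w (t - k) := by
  rw [convMulVec_eq_sum_range, range_eq_Ico, sum_eq_sum_Ico_succ_bot t.succ_pos, zero_add,
    Nat.succ_eq_add_one, Ico_add_one_right_eq_Icc, hΦ, zero_mulVec, zero_add]

theorem convMulVec_succ_of_zero (hΦ : Φ 0 = 0) (w : ℕ → n → R) (t : ℕ) :
    convMulVec Φ w (t + 1) = convMulVec (fun k => Φ (k + 1)) w t := by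
  rw [convMulVec, Nat.sum_antidiagonal_succ, hΦ, zero_mulVec, zero_add, convMulVec]

theorem convMulVec_congr {t : ℕ} (h : ∀ s ≤ t, v s = w s) :
    convMulVec Φ v t = convMulVec Φ w t :=
  sum_congr rfl fun q hq => by rw [h q.2 (HasAntidiagonal.antidiagonal.snd_le hq)]

theorem add_convMulVec (Φ Ψ : ℕ → Matrix m n R) (w : ℕ → n → R) :
    convMulVec (Φ + Ψ) w = convMulVec Φ w + convMulVec Ψ w := by
  ext1 t
  simp only [convMulVec, Pi.add_apply, add_mulVec, sum_add_distrib]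

theorem convMulVec_add (Φ : ℕ → Matrix m n R) (v w : ℕ → n → R) :
    convMulVec Φ (v + w) = convMulVec Φ v + convMulVec Φ w := by
  ext1 t
  simp only [convMulVec, Pi.add_apply, mulVec_add, sum_add_distrib]

theorem mulVec_convMulVec [Fintype m] (M : Matrix l m R) (Φ : ℕ → Matrix m n R)
    (w : ℕ → n → R) (t : ℕ) : M *ᵥ convMulVec Φ w t = convMulVec (fun k => M * Φ k) w t := by
  simp only [convMulVec, mulVec_sum, mulVec_mulVec]

theorem convMulVec_mulVec [Fintype p] (Φ : ℕ → Matrix m n R) (M : Matrix n p R)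
    (w : ℕ → p → R) : convMulVec Φ (fun s => M *ᵥ w s) = convMulVec (fun k => Φ k * M) w := by
  ext1 t
  simp only [convMulVec, mulVec_mulVec]

theorem single_zero_convMulVec [DecidableEq m] (M : Matrix m n R) (w : ℕ → n → R) (t : ℕ) :
    convMulVec (Pi.single 0 M) w t = M *ᵥ w t := by
  rw [convMulVec, sum_eq_single (0, t)]
  · simp
  · rintro ⟨i, j⟩ hq hne
    obtain rfl | hi := eq_or_ne i 0
    · simp_all
    · simp [hi]
  · simp

theorem convMulVec_convMulVec [Fintype l] (Φ : ℕ → Matrix m l R) (Ψ : ℕ → Matrix l n R)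
    (w : ℕ → n → R) : convMulVec Φ (convMulVec Ψ w) = convMulVec (convMul Φ Ψ) w := by
  ext1 t
  simp only [convMulVec, convMul, mulVec_sum, sum_mulVec, mulVec_mulVec, sum_sigma']
  apply sum_nbij' (fun ⟨⟨i, _⟩, ⟨k, l⟩⟩ => ⟨(i + k, l), (i, k)⟩)
    (fun ⟨⟨_, b⟩, ⟨i, k⟩⟩ => ⟨(i, k + b), (k, b)⟩) <;> aesop (add simp [add_assoc])

end convMulVec

end Matrix

section ClosedLoop

open Matrix

variable {R : Type*} [Semiring R] {m n p : Type*} [Fintype m] [Fintype n] [Fintype p]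

structure IsClosedLoop (A : Matrix n n R) (B : Matrix n m R) (C : Matrix p n R)
    (K : ℕ → Matrix m p R) (δx : ℕ → n → R) (δy : ℕ → p → R)
    (x : ℕ → n → R) (u : ℕ → m → R) : Prop where
  init : x 0 = 0
  input : u = convMulVec K fun t => C *ᵥ x t + δy t
  state : ∀ t, x (t + 1) = A *ᵥ x t + δx t + B *ᵥ u t

theorem IsClosedLoop.unique {A : Matrix n n R} {B : Matrix n m R} {C : Matrix p n R}
    {K : ℕ → Matrix m p R} {δx : ℕ → n → R} {δy : ℕ → p → R} {x x' : ℕ → n → R}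
    {u u' : ℕ → m → R} (h : IsClosedLoop A B C K δx δy x u)
    (h' : IsClosedLoop A B C K δx δy x' u') : x = x' ∧ u = u' := by
  have input_eq : ∀ t, (∀ s ≤ t, x s = x' s) → u t = u' t := fun t ht => by
    rw [h.input, h'.input]
    exact convMulVec_congr fun s hs => by rw [ht s hs]
  have state_eq : ∀ t, ∀ s ≤ t, x s = x' s := by
    intro t
    induction t with
    | zero => intro s hs; rw [Nat.le_zero.mp hs, h.init, h'.init]
    | succ t ih =>
      intro s hs
      obtain hs | rfl := Nat.le_succ_iff.mp hs
      · exact ih s hs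
      · rw [h.state, h'.state, ih t le_rfl, input_eq t ih]
  exact ⟨funext fun t => state_eq t t le_rfl, funext fun t => input_eq t (state_eq t)⟩

variable [DecidableEq n]

-- `δ₀` is the unit impulse; it absorbs the initial condition `Φxx 1 = 1` so that the recursions
-- below hold at every index.
local notation "δ₀" => (Pi.single 0 1 : ℕ → Matrix n n R)

structure IsSystemResponse (A : Matrix n n R) (B : Matrix n m R) (C : Matrix p n R)
    (K : ℕ → Matrix m p R) (Φxx : ℕ → Matrix n n R) (Φux : ℕ → Matrix m n R)
    (Φxy : ℕ → Matrix n p R) (Φuy : ℕ → Matrix m p R) : Prop where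
  xx_zero : Φxx 0 = 0
  xy_zero : Φxy 0 = 0
  ux_eq : Φux = convMul (fun k => K k * C) Φxx
  uy_eq : Φuy = K + convMul (fun k => K k * C) Φxy
  xx_succ : ∀ k, Φxx (k + 1) = A * Φxx k + B * Φux k + δ₀ k
  xy_succ : ∀ k, Φxy (k + 1) = A * Φxy k + B * Φuy k

namespace IsSystemResponse

variable {A : Matrix n n R} {B : Matrix n m R} {C : Matrix p n R} {K : ℕ → Matrix m p R}
  {Φxx : ℕ → Matrix n n R} {Φux : ℕ → Matrix m n R} {Φxy : ℕ → Matrix n p R}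
  {Φuy : ℕ → Matrix m p R}

theorem of_recursions (hxx0 : Φxx 0 = 0) (hxx1 : Φxx 1 = 1) (hxy0 : Φxy 0 = 0)
    (hux0 : Φux 0 = 0) (huy0 : Φuy 0 = K 0)
    (hux : ∀ n, 1 ≤ n → Φux n = ∑ m ∈ Finset.range n, K m * C * Φxx (n - m))
    (hxx : ∀ n, 1 ≤ n → Φxx (n + 1) = A * Φxx n + B * Φux n)
    (huy : ∀ n, 1 ≤ n → Φuy n = K n + ∑ m ∈ Finset.range n, K m * C * Φxy (n - m))
    (hxy : ∀ n, Φxy (n + 1) = A * Φxy n + B * Φuy n) :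
    IsSystemResponse A B C K Φxx Φux Φxy Φuy where
  xx_zero := hxx0
  xy_zero := hxy0
  ux_eq := funext fun k => by
    cases k with
    | zero => rw [hux0, convMul_apply_zero, hxx0, Matrix.mul_zero]
    | succ k => rw [hux _ k.succ_pos, convMul_eq_sum_range_of_zero hxx0]
  uy_eq := funext fun k => by
    cases k with
    | zero => rw [Pi.add_apply, huy0, convMul_apply_zero, hxy0, Matrix.mul_zero, add_zero]
    | succ k => rw [Pi.add_apply, huy _ k.succ_pos, convMul_eq_sum_range_of_zero hxy0]
  xx_succ k := by
    cases k with
    | zero => simp [hxx0, hxx1, hux0]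
    | succ k => rw [hxx _ k.succ_pos, Pi.single_eq_of_ne k.succ_ne_zero, add_zero]
  xy_succ := hxy

theorem isClosedLoop (hΦ : IsSystemResponse A B C K Φxx Φux Φxy Φuy)
    (δx : ℕ → n → R) (δy : ℕ → p → R) :
    IsClosedLoop A B C K δx δy (convMulVec Φxx δx + convMulVec Φxy δy)
      (convMulVec Φux δx + convMulVec Φuy δy) where
  init := by simp [convMulVec_apply_zero, hΦ.xx_zero, hΦ.xy_zero]
  input := by
    change _ = convMulVec K ((fun t => C *ᵥ _) + δy)
    rw [convMulVec_add, convMulVec_mulVec, convMulVec_add, convMulVec_convMulVec,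
      convMulVec_convMulVec, hΦ.uy_eq, add_convMulVec, ← hΦ.ux_eq]
    abel
  state t := by
    have hxx : (fun k => Φxx (k + 1)) = (fun k => A * Φxx k) + (fun k => B * Φux k) +
        δ₀ := funext hΦ.xx_succ
    have hxy : (fun k => Φxy (k + 1)) = (fun k => A * Φxy k) + fun k => B * Φuy k :=
      funext hΦ.xy_succ
    rw [Pi.add_apply, convMulVec_succ_of_zero hΦ.xx_zero, convMulVec_succ_of_zero hΦ.xy_zero,
      hxx, hxy]
    simp only [add_convMulVec, Pi.add_apply, ← mulVec_convMulVec, single_zero_convMulVec,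
      one_mulVec, mulVec_add]
    abel

theorem ux_succ_of_xx_dual (hΦ : IsSystemResponse A B C K Φxx Φux Φxy Φuy) {k : ℕ}
    (h : ∀ j ≤ k, Φxx (j + 1) = Φxx j * A + Φxy j * C + δ₀ j) :
    Φux (k + 1) = Φux k * A + Φuy k * C := by
  have hsplit : (fun j => Φxx j * A + Φxy j * C + δ₀ j) =
      (fun j => Φxx j * A) + (fun j => Φxy j * C) + δ₀ := rfl
  rw [hΦ.ux_eq, convMul_succ_of_zero hΦ.xx_zero, convMul_congr h, hsplit, convMul_add,
    convMul_add, hΦ.uy_eq]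
  simp only [Pi.add_apply, convMul_single_zero, convMul_mul, Matrix.mul_one, Matrix.add_mul]
  abel

theorem xx_dual (hΦ : IsSystemResponse A B C K Φxx Φux Φxy Φuy) (k : ℕ) :
    Φxx (k + 1) = Φxx k * A + Φxy k * C + δ₀ k := by
  induction k using Nat.strong_induction_on with
  | _ k ih =>
    cases k with
    | zero => simp [hΦ.xx_succ, hΦ.xx_zero, hΦ.xy_zero, hΦ.ux_eq, convMul_apply_zero]
    | succ k =>
      have hux := hΦ.ux_succ_of_xx_dual fun j hj => ih j (Nat.lt_succ_of_le hj)
      have hcomm : A * δ₀ k = δ₀ k * A := by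
        rw [Pi.single_apply]
        split_ifs <;> simp
      calc Φxx (k + 1 + 1)
          = A * (Φxx k * A + Φxy k * C + δ₀ k) + B * (Φux k * A + Φuy k * C) := by
            rw [hΦ.xx_succ, ih k k.lt_succ_self, hux, Pi.single_eq_of_ne k.succ_ne_zero,
              add_zero]
        _ = (A * Φxx k + B * Φux k + δ₀ k) * A + (A * Φxy k + B * Φuy k) * C := by
            simp only [Matrix.mul_add, Matrix.add_mul, Matrix.mul_assoc, hcomm]
            abel
        _ = Φxx (k + 1) * A + Φxy (k + 1) * C + δ₀ (k + 1) := by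
            rw [← hΦ.xx_succ, ← hΦ.xy_succ, Pi.single_eq_of_ne k.succ_ne_zero, add_zero]

theorem ux_dual (hΦ : IsSystemResponse A B C K Φxx Φux Φxy Φuy) (k : ℕ) :
    Φux (k + 1) = Φux k * A + Φuy k * C :=
  hΦ.ux_succ_of_xx_dual fun j _ => hΦ.xx_dual j

end IsSystemResponse

end ClosedLoop

/-- Time-domain necessity of the system level constraints (output
feedback): for any causal convolution feedback kernel `K`, the closed-loop kernels
`(Φxx, Φux, Φxy, Φuy)` defined from `K` (i) describe exactly the closed-loop maps from
the disturbances to the state and input, and (ii) satisfy the dual system level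
recursions. -/
theorem stmt12 {nx nu ny : ℕ}
    (A : Matrix (Fin nx) (Fin nx) ℝ) (B : Matrix (Fin nx) (Fin nu) ℝ)
    (C : Matrix (Fin ny) (Fin nx) ℝ)
    (K : ℕ → Matrix (Fin nu) (Fin ny) ℝ)
    (Φxx : ℕ → Matrix (Fin nx) (Fin nx) ℝ) (Φux : ℕ → Matrix (Fin nu) (Fin nx) ℝ)
    (Φxy : ℕ → Matrix (Fin nx) (Fin ny) ℝ) (Φuy : ℕ → Matrix (Fin nu) (Fin ny) ℝ)
    (hxx0 : Φxx 0 = 0) (hxx1 : Φxx 1 = 1) (hxy0 : Φxy 0 = 0) (hux0 : Φux 0 = 0)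
    (huy0 : Φuy 0 = K 0)
    (hux : ∀ n, 1 ≤ n → Φux n = ∑ m ∈ Finset.range n, K m * C * Φxx (n - m))
    (hxx : ∀ n, 1 ≤ n → Φxx (n + 1) = A * Φxx n + B * Φux n)
    (huy : ∀ n, 1 ≤ n → Φuy n = K n + ∑ m ∈ Finset.range n, K m * C * Φxy (n - m))
    (hxy : ∀ n, Φxy (n + 1) = A * Φxy n + B * Φuy n) :
    (∀ (δx : ℕ → Fin nx → ℝ) (δy : ℕ → Fin ny → ℝ)
        (x : ℕ → Fin nx → ℝ) (y : ℕ → Fin ny → ℝ) (u : ℕ → Fin nu → ℝ),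
      x 0 = 0 →
      (∀ t, y t = C.mulVec (x t) + δy t) →
      (∀ t, u t = ∑ m ∈ Finset.range (t + 1), (K m).mulVec (y (t - m))) →
      (∀ t, x (t + 1) = A.mulVec (x t) + δx t + B.mulVec (u t)) →
      ∀ t, x t = (∑ n ∈ Finset.Icc 1 t, (Φxx n).mulVec (δx (t - n))) +
            ∑ n ∈ Finset.Icc 1 t, (Φxy n).mulVec (δy (t - n)) ∧
          u t = (∑ n ∈ Finset.Icc 1 t, (Φux n).mulVec (δx (t - n))) +
            ∑ n ∈ Finset.range (t + 1), (Φuy n).mulVec (δy (t - n))) ∧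
    (∀ n, 1 ≤ n → Φxx (n + 1) = Φxx n * A + Φxy n * C) ∧
    (∀ n, Φux (n + 1) = Φux n * A + Φuy n * C) := by
  have hΦ : IsSystemResponse A B C K Φxx Φux Φxy Φuy :=
    .of_recursions hxx0 hxx1 hxy0 hux0 huy0 hux hxx huy hxy
  refine ⟨fun δx δy x y u hx0 hy hu hstate t => ?_, fun k hk => ?_, hΦ.ux_dual⟩
  · have hloop : IsClosedLoop A B C K δx δy x u :=
      ⟨hx0, funext fun t => by rw [hu, Matrix.convMulVec_eq_sum_range]; simp only [hy], hstate⟩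
    obtain ⟨rfl, rfl⟩ := hloop.unique (hΦ.isClosedLoop δx δy)
    simp only [Pi.add_apply, Matrix.convMulVec_eq_sum_Icc_of_zero hxx0,
      Matrix.convMulVec_eq_sum_Icc_of_zero hxy0, Matrix.convMulVec_eq_sum_Icc_of_zero hux0,
      Matrix.convMulVec_eq_sum_range Φuy, and_self]
  · rw [hΦ.xx_dual, Pi.single_eq_of_ne (by omega), add_zero]
end

section
/- Adjoint-state formula for the system-level objective gradient: let A ∈ ℝ^{n_x×n_x}, B ∈ ℝ^{n_x×n_u}, E ∈ ℝ^{n_x×m}, W_x ∈ ℝ^{n_z×n_x}, W_u ∈ ℝ^{n_z×n_u} with W_uᵀ W_x = 0, and W_w ∈ ℝ^{m×n_w}, and fix a horizon N ≥ 1. For Φ_u : {0, …, N} → ℝ^{n_u×m}, define the state response Φ_x : {0, …, N} → ℝ^{n_x×m} by Φ_x(0) = 0, Φ_x(1) = E + B·Φ_u(0), and Φ_x(n+1) = A·Φ_x(n) + B·Φ_u(n) for 1 ≤ n ≤ N−1, and define the objective J(Φ_u) = Σ_{n=0}^{N} ‖(W_x·Φ_x(n) + W_u·Φ_u(n))·W_w‖_F².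 Define the adjoint variables Δ : {0, …, N} → ℝ^{n_x×m} by the backward recursion Δ(N) = 0 and Δ(n−1) = Aᵀ·Δ(n) + (W_xᵀ W_x)·Φ_x(n) for 1 ≤ n ≤ N. Then J is differentiable and its gradient with respect to the Frobenius inner product is given componentwise, for each n ∈ {0, …, N}, by ∇_{Φ_u(n)} J(Φ_u) = 2·(W_uᵀ W_u)·Φ_u(n)·(W_w W_wᵀ) + 2·Bᵀ·Δ(n)·(W_w W_wᵀ). -/
/-!
The state response is affine in `Φu`; its derivative in the direction `V` is the response `δ`
of the dynamics to the input `B V` from the zero state. Hence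
`DJ(Φu) V = 2 Σₙ ⟪(Wx Φx(n) + Wu Φu(n)) Ww, (Wx δ(n) + Wu V(n)) Ww⟫`, and the orthogonality
`Wuᵀ Wx = 0` splits each term into a state part `⟪Wxᵀ Wx Φx(n) Ww Wwᵀ, δ(n)⟫` and an input part.
Pairing the backward recursion for `Δ` with the forward recursion `δ(n+1) = A δ(n) + B V(n)`
makes the state parts telescope into `Σₙ ⟪Bᵀ Δ(n) Ww Wwᵀ, V(n)⟫`.
-/

open scoped Matrix

attribute [local instance] Matrix.frobeniusSeminormedAddCommGroup
  Matrix.frobeniusNormedAddCommGroup Matrix.frobeniusNormedSpace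

open Matrix Finset

noncomputable def frobeniusPairing {m n : Type*} [Fintype m] [Fintype n] :
    Matrix m n ℝ →L[ℝ] Matrix m n ℝ →L[ℝ] ℝ :=
  (LinearMap.mk₂ ℝ (fun X Y => trace (Xᵀ * Y))
    (fun _ _ _ => by rw [transpose_add, Matrix.add_mul, trace_add])
    (fun _ _ _ => by rw [transpose_smul, smul_mul, trace_smul, smul_eq_mul])
    (fun _ _ _ => by rw [Matrix.mul_add, trace_add])
    (fun _ _ _ => by rw [Matrix.mul_smul, trace_smul, smul_eq_mul])).toContinuousBilinearMap

local notation "⟪" X ", " Y "⟫" => frobeniusPairing X Y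

section FrobeniusPairing

variable {l m n k : Type*} [Fintype l] [Fintype m] [Fintype n] [Fintype k]

theorem frobeniusPairing_apply (X Y : Matrix m n ℝ) : ⟪X, Y⟫ = trace (Xᵀ * Y) := rfl

theorem frobeniusPairing_comm (X Y : Matrix m n ℝ) : ⟪X, Y⟫ = ⟪Y, X⟫ := by
  rw [frobeniusPairing_apply, frobeniusPairing_apply, ← trace_transpose, transpose_mul,
    transpose_transpose]

theorem frobeniusPairing_mul_left (P : Matrix l n ℝ) (M : Matrix l m ℝ) (Y : Matrix m n ℝ) :
    ⟪P, M * Y⟫ = ⟪Mᵀ * P, Y⟫ := by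
  simp only [frobeniusPairing_apply, transpose_mul, transpose_transpose, Matrix.mul_assoc]

theorem frobeniusPairing_mul_right_mul_right (P Q : Matrix m n ℝ) (W : Matrix n k ℝ) :
    ⟪P * W, Q * W⟫ = ⟪P * (W * Wᵀ), Q⟫ := by
  simp only [frobeniusPairing_apply, transpose_mul, transpose_transpose, Matrix.mul_assoc]
  rw [trace_mul_comm W]
  simp only [Matrix.mul_assoc]

theorem frobeniusPairing_weighted_of_orthogonal {ι κ ζ μ ν : Type*} [Fintype ι] [Fintype κ]
    [Fintype ζ] [Fintype μ] [Fintype ν] (Wx : Matrix ζ ι ℝ) (Wu : Matrix ζ κ ℝ)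
    (Ww : Matrix μ ν ℝ) (hW : Wuᵀ * Wx = 0) (X Y : Matrix ι μ ℝ) (U Z : Matrix κ μ ℝ) :
    ⟪(Wx * X + Wu * U) * Ww, (Wx * Y + Wu * Z) * Ww⟫ =
      ⟪Wxᵀ * Wx * X * (Ww * Wwᵀ), Y⟫ + ⟪Wuᵀ * Wu * U * (Ww * Wwᵀ), Z⟫ := by
  have hW' : Wxᵀ * Wu = 0 := by rw [← transpose_transpose (Wxᵀ * Wu), transpose_mul,
    transpose_transpose, hW, transpose_zero]
  rw [frobeniusPairing_mul_right_mul_right]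
  simp only [map_add, _root_.add_apply, frobeniusPairing_mul_left, Matrix.add_mul,
    ← Matrix.mul_assoc, hW, hW', Matrix.zero_mul, map_zero, _root_.zero_apply, add_zero, zero_add]

theorem HasFDerivAt.trace_transpose_mul_self {E : Type*} [NormedAddCommGroup E]
    [NormedSpace ℝ E] {F : E → Matrix m n ℝ} {F' : E →L[ℝ] Matrix m n ℝ} {x : E}
    (hF : HasFDerivAt F F' x) :
    HasFDerivAt (fun y => trace ((F y)ᵀ * F y)) ((2 : ℝ) • (frobeniusPairing (F x)).comp F') x := by
  refine (frobeniusPairing.hasFDerivAt_of_bilinear hF hF).congr_fderiv ?_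
  ext v
  change ⟪F x, F' v⟫ + ⟪F' v, F x⟫ = _
  rw [frobeniusPairing_comm (F' v), ← two_smul ℝ]
  rfl

end FrobeniusPairing

section AdjointState

variable {ι κ μ : Type*} [Fintype ι] [Fintype κ] [Fintype μ]

theorem sum_frobeniusPairing_adjoint (N : ℕ) (A : Matrix ι ι ℝ) (B : Matrix ι κ ℝ)
    (Q Δ d : ℕ → Matrix ι μ ℝ) (v : ℕ → Matrix κ μ ℝ)
    (hd0 : d 0 = 0) (hd : ∀ n < N, d (n + 1) = A * d n + B * v n)
    (hΔN : Δ N = 0) (hΔ : ∀ n < N, Δ n = Aᵀ * Δ (n + 1) + Q (n + 1)) :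
    ∑ n ∈ range (N + 1), ⟪Q n, d n⟫ = ∑ n ∈ range (N + 1), ⟪Bᵀ * Δ n, v n⟫ := by
  -- pairing `Δ n` with `d (n + 1)` in two ways
  have step : ∀ n ∈ range N, ⟪Q (n + 1), d (n + 1)⟫ - ⟪Bᵀ * Δ n, v n⟫
      = ⟪Δ n, A * d n⟫ - ⟪Δ (n + 1), A * d (n + 1)⟫ := by
    intro n hn
    have hn : n < N := mem_range.mp hn
    have h₁ : ⟪Δ n, d (n + 1)⟫ = ⟪Δ n, A * d n⟫ + ⟪Bᵀ * Δ n, v n⟫ := by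
      rw [hd n hn, map_add, frobeniusPairing_mul_left (Δ n) B]
    have h₂ : ⟪Δ n, d (n + 1)⟫ = ⟪Δ (n + 1), A * d (n + 1)⟫ + ⟪Q (n + 1), d (n + 1)⟫ := by
      rw [hΔ n hn, map_add, _root_.add_apply, frobeniusPairing_mul_left]
    linarith
  have telescope := sum_range_sub' (fun n => ⟪Δ n, A * d n⟫) N
  rw [← sum_congr rfl step, sum_sub_distrib, hd0, hΔN, Matrix.mul_zero, map_zero, map_zero,
    _root_.zero_apply, sub_zero, sub_eq_zero] at telescope
  rw [sum_range_succ', sum_range_succ, telescope, hd0, hΔN, map_zero, Matrix.mul_zero, map_zero,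
    _root_.zero_apply]

end AdjointState

section StateResponse

open Fin.NatCast

variable {ι κ μ : Type*} [Fintype ι] [Fintype κ] [Fintype μ]

theorem HasFDerivAt.matrix_const_mul {E : Type*} [NormedAddCommGroup E] [NormedSpace ℝ E]
    {f : E → Matrix κ μ ℝ} {f' : E →L[ℝ] Matrix κ μ ℝ} {x : E} (X : Matrix ι κ ℝ)
    (hf : HasFDerivAt f f' x) :
    HasFDerivAt (fun y => X * f y) ((mulLeftLinearMap μ ℝ X).toContinuousLinearMap ∘L f') x :=
  (mulLeftLinearMap μ ℝ X).toContinuousLinearMap.hasFDerivAt.comp x hf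

theorem HasFDerivAt.matrix_mul_const {E : Type*} [NormedAddCommGroup E] [NormedSpace ℝ E]
    {f : E → Matrix ι κ ℝ} {f' : E →L[ℝ] Matrix ι κ ℝ} {x : E} (X : Matrix κ μ ℝ)
    (hf : HasFDerivAt f f' x) :
    HasFDerivAt (fun y => f y * X) ((mulRightLinearMap ι ℝ X).toContinuousLinearMap ∘L f') x :=
  (mulRightLinearMap ι ℝ X).toContinuousLinearMap.hasFDerivAt.comp x hf

-- `(n : Fin (N + 1))` wraps around modulo `N + 1`; only the values for `n < N` are ever used.
noncomputable def stateSensitivity (N : ℕ) (A : Matrix ι ι ℝ) (B : Matrix ι κ ℝ) :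
    ℕ → (Fin (N + 1) → Matrix κ μ ℝ) →L[ℝ] Matrix ι μ ℝ
  | 0 => 0
  | n + 1 => (mulLeftLinearMap μ ℝ A).toContinuousLinearMap ∘L stateSensitivity N A B n +
      (mulLeftLinearMap μ ℝ B).toContinuousLinearMap ∘L ContinuousLinearMap.proj (n : Fin (N + 1))

theorem stateSensitivity_succ_apply (N : ℕ) (A : Matrix ι ι ℝ) (B : Matrix ι κ ℝ) (n : ℕ)
    (V : Fin (N + 1) → Matrix κ μ ℝ) :
    stateSensitivity N A B (n + 1) V = A * stateSensitivity N A B n V + B * V n := rfl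

theorem sum_frobeniusPairing_stateSensitivity (N : ℕ) (A : Matrix ι ι ℝ) (B : Matrix ι κ ℝ)
    (Q Δ : ℕ → Matrix ι μ ℝ) (hΔN : Δ N = 0)
    (hΔ : ∀ n, 1 ≤ n → n ≤ N → Δ (n - 1) = Aᵀ * Δ n + Q n) (V : Fin (N + 1) → Matrix κ μ ℝ) :
    ∑ n : Fin (N + 1), ⟪Q n, stateSensitivity N A B n V⟫ = ∑ n : Fin (N + 1), ⟪Bᵀ * Δ n, V n⟫ := by
  have h := sum_frobeniusPairing_adjoint N A B Q Δ (stateSensitivity N A B · V) (V ·) rfl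
    (fun n _ => stateSensitivity_succ_apply N A B n V) hΔN
    (fun n hn => hΔ (n + 1) (by omega) (by omega))
  rw [← Fin.sum_univ_eq_sum_range, ← Fin.sum_univ_eq_sum_range] at h
  simpa only [Fin.cast_val_eq_self] using h

theorem hasFDerivAt_stateResponse {N : ℕ} (A : Matrix ι ι ℝ) (B : Matrix ι κ ℝ)
    (E : Matrix ι μ ℝ) (Φx : (Fin (N + 1) → Matrix κ μ ℝ) → ℕ → Matrix ι μ ℝ)
    (h0 : ∀ u, Φx u 0 = 0) (h1 : ∀ u, Φx u 1 = E + B * u 0)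
    (hrec : ∀ u n, 1 ≤ n → (hn : n < N) → Φx u (n + 1) = A * Φx u n + B * u ⟨n, by omega⟩)
    (u : Fin (N + 1) → Matrix κ μ ℝ) :
    ∀ n ≤ N, HasFDerivAt (Φx · n) (stateSensitivity N A B n) u := by
  intro n
  induction n with
  | zero =>
    intro _
    simp only [h0]
    exact hasFDerivAt_const 0 u
  | succ n ih =>
    intro hn
    -- the recursion holds for `n = 0` as well, up to the constant `E`
    obtain ⟨c, hc⟩ : ∃ c, ∀ u, Φx u (n + 1) = A * Φx u n + B * u n + c := by
      rcases n with _ | n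
      · exact ⟨E, fun u => by rw [h1, h0, Matrix.mul_zero, zero_add, add_comm]; rfl⟩
      · refine ⟨0, fun u => ?_⟩
        rw [add_zero, hrec u (n + 1) (by omega) (by omega), Fin.natCast_eq_mk]
    simp only [hc]
    exact (((ih (by omega)).matrix_const_mul A).add
      ((hasFDerivAt_apply (n : Fin (N + 1)) u).matrix_const_mul B)).add_const c

end StateResponse

/-- Adjoint-state formula for the gradient of the system-level
objective `J(Φu) = Σₙ ‖(Wx Φx(n) + Wu Φu(n)) Ww‖_F²`, where `Φx` is the state response
generated by `Φu` through the dynamics and `Δ` is the adjoint variable obtained by the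
backward recursion: `J` is differentiable and its gradient with respect to the
Frobenius inner product is, componentwise,
`∇_{Φu(n)} J = 2 (Wuᵀ Wu) Φu(n) (Ww Wwᵀ) + 2 Bᵀ Δ(n) (Ww Wwᵀ)`. -/
theorem stmt13 {nx nu nz m nw : ℕ} {N : ℕ}
    (A : Matrix (Fin nx) (Fin nx) ℝ) (B : Matrix (Fin nx) (Fin nu) ℝ)
    (E : Matrix (Fin nx) (Fin m) ℝ)
    (Wx : Matrix (Fin nz) (Fin nx) ℝ) (Wu : Matrix (Fin nz) (Fin nu) ℝ)
    (hW : Wuᵀ * Wx = 0)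
    (Ww : Matrix (Fin m) (Fin nw) ℝ)
    (Φxf : (Fin (N + 1) → Matrix (Fin nu) (Fin m) ℝ) → ℕ → Matrix (Fin nx) (Fin m) ℝ)
    (hΦx0 : ∀ Φu, Φxf Φu 0 = 0)
    (hΦx1 : ∀ Φu, Φxf Φu 1 = E + B * Φu 0)
    (hΦxrec : ∀ Φu n, ∀ _ : 1 ≤ n, ∀ _ : n ≤ N - 1,
      Φxf Φu (n + 1) = A * Φxf Φu n + B * Φu ⟨n, by omega⟩)
    (J : (Fin (N + 1) → Matrix (Fin nu) (Fin m) ℝ) → ℝ)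
    (hJ : ∀ Φu, J Φu = ∑ n : Fin (N + 1),
      Matrix.trace
        (((Wx * Φxf Φu n + Wu * Φu n) * Ww)ᵀ * ((Wx * Φxf Φu n + Wu * Φu n) * Ww)))
    (Φu0 : Fin (N + 1) → Matrix (Fin nu) (Fin m) ℝ)
    (Δ : ℕ → Matrix (Fin nx) (Fin m) ℝ)
    (hΔN : Δ N = 0)
    (hΔrec : ∀ n, 1 ≤ n → n ≤ N → Δ (n - 1) = Aᵀ * Δ n + (Wxᵀ * Wx) * Φxf Φu0 n) :
    Differentiable ℝ J ∧
      ∀ V : Fin (N + 1) → Matrix (Fin nu) (Fin m) ℝ,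
        fderiv ℝ J Φu0 V = ∑ n : Fin (N + 1),
          Matrix.trace
            (((2 : ℝ) • ((Wuᵀ * Wu) * Φu0 n * (Ww * Wwᵀ)) +
                (2 : ℝ) • (Bᵀ * Δ n * (Ww * Wwᵀ)))ᵀ * V n) := by
  have hS := hasFDerivAt_stateResponse A B E Φxf hΦx0 hΦx1
    fun u n h1 h2 => hΦxrec u n h1 (by omega)
  have hF (u) (n : Fin (N + 1)) := (((hS u n n.is_le).matrix_const_mul Wx).add
    ((hasFDerivAt_apply n u).matrix_const_mul Wu)).matrix_mul_const Ww
  have hJ' (u) := (HasFDerivAt.fun_sum fun n _ =>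
    (hF u n).trace_transpose_mul_self).congr_of_eventuallyEq (.of_forall hJ)
  refine ⟨fun u => (hJ' u).differentiableAt, fun V => ?_⟩
  have hadj := sum_frobeniusPairing_stateSensitivity N A B
    (fun n => Wxᵀ * Wx * Φxf Φu0 n * (Ww * Wwᵀ)) (fun n => Δ n * (Ww * Wwᵀ))
    (by rw [hΔN, Matrix.zero_mul])
    (fun n h1 h2 => by rw [hΔrec n h1 h2, Matrix.add_mul, Matrix.mul_assoc]) V
  calc fderiv ℝ J Φu0 V
      = ∑ n : Fin (N + 1), 2 * ⟪(Wx * Φxf Φu0 n + Wu * Φu0 n) * Ww,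
          (Wx * stateSensitivity N A B n V + Wu * V n) * Ww⟫ :=
        (DFunLike.congr_fun (hJ' Φu0).fderiv V).trans (_root_.sum_apply ..)
    _ = ∑ n : Fin (N + 1),
          (2 * ⟪Wuᵀ * Wu * Φu0 n * (Ww * Wwᵀ), V n⟫ + 2 * ⟪Bᵀ * (Δ n * (Ww * Wwᵀ)), V n⟫) := by
        simp only [frobeniusPairing_weighted_of_orthogonal Wx Wu Ww hW, mul_add, sum_add_distrib,
          ← mul_sum]
        rw [hadj, add_comm]
    _ = _ := sum_congr rfl fun n _ => by
        rw [← frobeniusPairing_apply, map_add, map_smul, map_smul, _root_.add_apply,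
          _root_.smul_apply, _root_.smul_apply, smul_eq_mul, smul_eq_mul, Matrix.mul_assoc Bᵀ]
end

section
/- Affine form of the system-level pseudo-gradient: in the setting of the system-level objective — matrices A ∈ ℝ^{n_x×n_x}, B^p ∈ ℝ^{n_x×n_u^p} for players p = 1,…,P, E ∈ ℝ^{n_x×m}, weights W_x^p ∈ ℝ^{n_z×n_x}, W_u^p ∈ ℝ^{n_z×n_u^p} with (W_u^p)ᵀ W_x^p = 0, noise matrix W_w ∈ ℝ^{m×n_w}, horizon N ≥ 1; joint input kernels Φ_u = (Φ_u^1, …, Φ_u^P) with Φ_u^p : {0,…,N} → ℝ^{n_u^p×m}; state response Φ_x defined by Φ_x(0) = 0, Φ_x(1) = E + Σ_p B^p Φ_u^p(0), Φ_x(n+1) = A Φ_x(n) + Σ_p B^p Φ_u^p(n) for 1 ≤ n ≤ N−1; and objectives J^p(Φ_u) = Σ_{n=0}^{N} ‖(W_x^p Φ_x(n) + W_u^p Φ_u^p(n)) W_w‖_F² — the partial gradient of J^p with respect to Φ_u^p is the affine map ∇_{Φ_u^p} J^p(Φ_u) = 2·Σ_{q=1}^{P} (H^{pp})ᵀ (H^{pq})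 Φ_u^q (W_w W_wᵀ) + h^p, where Φ_u^q is regarded as the (N+1)·n_u^q × m matrix stacking its components, H^{pq} is the block-lower-triangular matrix with blocks H^{pq}_{n,n'} = W_u^p if n = n' and p = q, H^{pq}_{n,n'} = W_x^p A^{(n−1)−n'} B^q if n > n', and H^{pq}_{n,n'} = 0 otherwise (indices 0 ≤ n, n' ≤ N), and h^p is a constant matrix independent of Φ_u (arising from the initial-condition term E). -/
open scoped Matrix

/-- The `n`-th block row (of height `r`) of a stacked matrix with rows indexed by
`Fin k × Fin r`. -/
def blockRow {k r c : ℕ} (X : Matrix (Fin k × Fin r) (Fin c) ℝ) (n : Fin k) :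
    Matrix (Fin r) (Fin c) ℝ :=
  Matrix.of fun j i => X (n, j) i

/-- The block-lower-triangular matrix `H^{pq}` of the system-level game: block
`(n, n')` equals `W_u^p` if `n = n'` and `p = q`, equals `W_x^p A^{(n-1)-n'} B^q` if
`n > n'`, and `0` otherwise. -/
def Hblk {P nz nx : ℕ} {nu : Fin P → ℕ} (N : ℕ)
    (A : Matrix (Fin nx) (Fin nx) ℝ)
    (Wx : Fin P → Matrix (Fin nz) (Fin nx) ℝ)
    (Wu : (p : Fin P) → Matrix (Fin nz) (Fin (nu p)) ℝ)
    (B : (q : Fin P) → Matrix (Fin nx) (Fin (nu q)) ℝ)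
    (p q : Fin P) :
    Matrix (Fin (N + 1) × Fin nz) (Fin (N + 1) × Fin (nu q)) ℝ :=
  Matrix.of fun ni n'j =>
    if (ni.1 : ℕ) = (n'j.1 : ℕ) then
      (if hpq : p = q then Wu p ni.2 (Fin.cast (congrArg nu hpq.symm) n'j.2) else 0)
    else if (n'j.1 : ℕ) < (ni.1 : ℕ) then
      (Wx p * A ^ ((ni.1 : ℕ) - 1 - (n'j.1 : ℕ)) * B q) ni.2 n'j.2
    else 0

/-! Unrolling the recursion gives `Φ_x(n) = A^{n-1} E + Σ_q Σ_{n' < n} A^{n-1-n'} B^q Φ_u^q(n')`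
for `n ≥ 1`, so the stacked weighted response of player `p`, whose block `n` is
`W_x^p Φ_x(n) + W_u^p Φ_u^p(n)`, is the affine function `Z = Σ_q H^{pq} Φ_u^q + G` of the
kernels, where `G` stacks the free responses `W_x^p A^{n-1} E` of the initial condition.
Hence `J^p = ‖Z W_w‖_F²`, and moving `Φ_u^p` by `t V` moves `Z` by `t H^{pp} V`, so the
directional derivative is `2 ⟨Z W_w, H^{pp} V W_w⟩_F = ⟨2 (H^{pp})ᵀ Z W_w W_wᵀ, V⟩_F`.
This gives `h^p = 2 (H^{pp})ᵀ G W_w W_wᵀ`. -/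

lemma sum_mul_update_add {ι α β : Type*} {κ : ι → Type*} [Fintype ι] [DecidableEq ι]
    [∀ q, Fintype (κ q)] (H : (q : ι) → Matrix α (κ q) ℝ) (Φ : (q : ι) → Matrix (κ q) β ℝ)
    (p : ι) (V : Matrix (κ p) β ℝ) :
    ∑ q, H q * Function.update Φ p (Φ p + V) q = ∑ q, H q * Φ q + H p * V := by
  rw [← Finset.add_sum_erase _ _ (Finset.mem_univ p),
    ← Finset.add_sum_erase _ _ (Finset.mem_univ p), Function.update_self, Matrix.mul_add,
    add_right_comm]
  congr 2
  exact Finset.sum_congr rfl fun q hq => by rw [Function.update_of_ne (Finset.ne_of_mem_erase hq)]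

lemma trace_transpose_mul_sandwich {a b c d : Type*} [Fintype a] [Fintype b] [Fintype c]
    [Fintype d] (H : Matrix a b ℝ) (Z : Matrix a c ℝ) (W : Matrix c d ℝ) (V : Matrix b c ℝ) :
    ((Hᵀ * Z * (W * Wᵀ))ᵀ * V).trace = ((Z * W)ᵀ * (H * V * W)).trace := by
  simp only [Matrix.transpose_mul, Matrix.transpose_transpose, Matrix.mul_assoc]
  rw [Matrix.trace_mul_comm]
  simp only [Matrix.mul_assoc]

lemma hasDerivAt_trace_transpose_mul_self_add_smul {a b : Type*} [Fintype a] [Fintype b]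
    (M K : Matrix a b ℝ) :
    HasDerivAt (fun t : ℝ => ((M + t • K)ᵀ * (M + t • K)).trace) (2 * (Mᵀ * K).trace) 0 := by
  have hsymm : (Kᵀ * M).trace = (Mᵀ * K).trace := by
    rw [← Matrix.trace_transpose, Matrix.transpose_mul, Matrix.transpose_transpose]
  have hexpand : (fun t : ℝ => ((M + t • K)ᵀ * (M + t • K)).trace)
      = fun t => (Mᵀ * M).trace + t * (2 * (Mᵀ * K).trace) + t ^ 2 * (Kᵀ * K).trace := by
    funext t
    simp only [Matrix.transpose_add, Matrix.transpose_smul, Matrix.add_mul, Matrix.mul_add,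
      Matrix.smul_mul, Matrix.mul_smul, Matrix.trace_add, Matrix.trace_smul, smul_eq_mul, hsymm]
    ring
  rw [hexpand]
  have hlin : HasDerivAt (fun t : ℝ => (Mᵀ * M).trace + t * (2 * (Mᵀ * K).trace))
      (2 * (Mᵀ * K).trace) 0 := by
    simpa using ((hasDerivAt_id (0 : ℝ)).mul_const (2 * (Mᵀ * K).trace)).const_add (Mᵀ * M).trace
  have hquad : HasDerivAt (fun t : ℝ => t ^ 2 * (Kᵀ * K).trace) 0 0 := by
    simpa using (hasDerivAt_pow 2 (0 : ℝ)).mul_const (Kᵀ * K).trace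
  have h := hlin.add hquad
  rw [add_zero] at h
  exact h

lemma blockRow_add {k r c : ℕ} (X Y : Matrix (Fin k × Fin r) (Fin c) ℝ) (n : Fin k) :
    blockRow (X + Y) n = blockRow X n + blockRow Y n := rfl

lemma blockRow_mul {k r c d : ℕ} (X : Matrix (Fin k × Fin r) (Fin c) ℝ)
    (W : Matrix (Fin c) (Fin d) ℝ) (n : Fin k) :
    blockRow (X * W) n = blockRow X n * W := by
  ext j i
  simp [blockRow, Matrix.mul_apply]

lemma trace_transpose_mul_eq_sum_blockRow {k r c : ℕ}
    (X Y : Matrix (Fin k × Fin r) (Fin c) ℝ) :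
    (Xᵀ * Y).trace = ∑ n, ((blockRow X n)ᵀ * blockRow Y n).trace := by
  simp only [Matrix.trace, Matrix.diag, Matrix.mul_apply, Matrix.transpose_apply, blockRow,
    Matrix.of_apply, Fintype.sum_prod_type]
  exact Finset.sum_comm

lemma Fin.sum_ite_val_lt_succ {M : Type*} [AddCommMonoid M] {N n : ℕ} (hn : n < N + 1)
    (f : Fin (N + 1) → M) :
    (∑ k : Fin (N + 1), if (k : ℕ) < n + 1 then f k else 0)
      = (∑ k : Fin (N + 1), if (k : ℕ) < n then f k else 0) + f ⟨n, hn⟩ := by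
  simp only [← Finset.sum_filter]
  have hfilter : Finset.univ.filter (fun k : Fin (N + 1) => (k : ℕ) < n + 1)
      = insert ⟨n, hn⟩ (Finset.univ.filter fun k : Fin (N + 1) => (k : ℕ) < n) := by
    ext k
    simp only [Finset.mem_filter, Finset.mem_univ, true_and, Finset.mem_insert, Fin.ext_iff]
    omega
  rw [hfilter, Finset.sum_insert (by simp), add_comm]

lemma eq_pow_mul_add_sum_of_recurrence {R : Type*} [Semiring R] {ι κ : Type*} [Fintype ι]
    [DecidableEq ι] {N : ℕ} (A : Matrix ι ι R) (E : Matrix ι κ R) (x : ℕ → Matrix ι κ R)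
    (u : Fin (N + 1) → Matrix ι κ R) (h1 : x 1 = E + u 0)
    (hrec : ∀ n, ∀ _ : 1 ≤ n, ∀ _ : n ≤ N - 1, x (n + 1) = A * x n + u ⟨n, by omega⟩)
    {n : ℕ} (hn1 : 1 ≤ n) (hnN : n ≤ N) :
    x n = A ^ (n - 1) * E
      + ∑ k : Fin (N + 1), if (k : ℕ) < n then A ^ (n - 1 - k) * u k else 0 := by
  induction n, hn1 using Nat.le_induction with
  | base =>
    rw [h1, Fin.sum_ite_val_lt_succ (by omega)]
    simp
  | succ n hn ih =>
    rw [hrec n hn (by omega), ih (by omega), Fin.sum_ite_val_lt_succ (by omega), Matrix.mul_add,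
      Matrix.mul_sum, ← Matrix.mul_assoc, ← pow_succ', Nat.sub_add_cancel hn, Nat.add_sub_cancel,
      Nat.sub_self, pow_zero, Matrix.one_mul, add_assoc]
    congr 2
    refine Finset.sum_congr rfl fun k _ => ?_
    split_ifs with hk
    · rw [← Matrix.mul_assoc, ← pow_succ']
      congr 2
      omega
    · rw [Matrix.mul_zero]

section SystemLevel

variable {P nz nx : ℕ} {nu : Fin P → ℕ} (N : ℕ) (A : Matrix (Fin nx) (Fin nx) ℝ)
  (Wx : Fin P → Matrix (Fin nz) (Fin nx) ℝ) (Wu : (p : Fin P) → Matrix (Fin nz) (Fin (nu p)) ℝ)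
  (B : (q : Fin P) → Matrix (Fin nx) (Fin (nu q)) ℝ)

lemma Hblk_apply (p q : Fin P) (n n' : Fin (N + 1)) (i : Fin nz) (j : Fin (nu q)) :
    Hblk N A Wx Wu B p q (n, i) (n', j)
      = (if hpq : p = q then (if n = n' then Wu p i (Fin.cast (congrArg nu hpq.symm) j) else 0)
          else 0)
        + if (n' : ℕ) < n then (Wx p * A ^ ((n : ℕ) - 1 - n') * B q) i j else 0 := by
  rcases eq_or_ne n n' with rfl | hne
  · simp [Hblk]
  · have hne' : (n : ℕ) ≠ n' := Fin.val_ne_of_ne hne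
    simp [Hblk, hne, hne']

lemma blockRow_sum_Hblk_mul {m : ℕ} (p : Fin P)
    (Φs : (q : Fin P) → Matrix (Fin (N + 1) × Fin (nu q)) (Fin m) ℝ) (n : Fin (N + 1)) :
    blockRow (∑ q, Hblk N A Wx Wu B p q * Φs q) n
      = Wu p * blockRow (Φs p) n
        + ∑ q, ∑ n' : Fin (N + 1), if (n' : ℕ) < n then
            Wx p * A ^ ((n : ℕ) - 1 - n') * B q * blockRow (Φs q) n' else 0 := by
  ext j i
  simp only [blockRow, Matrix.of_apply, Matrix.sum_apply, Matrix.add_apply, Matrix.mul_apply,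
    Fintype.sum_prod_type, Hblk_apply, add_mul, Finset.sum_add_distrib]
  congr 1
  · rw [Fintype.sum_eq_single p (fun q hq => by simp [Ne.symm hq])]
    simp
  · refine Finset.sum_congr rfl fun q _ => Finset.sum_congr rfl fun n' _ => ?_
    split_ifs <;> simp [Matrix.mul_apply]

def initialResponse {m : ℕ} (Wxp : Matrix (Fin nz) (Fin nx) ℝ) (E : Matrix (Fin nx) (Fin m) ℝ) :
    Matrix (Fin (N + 1) × Fin nz) (Fin m) ℝ :=
  Matrix.of fun ni i => if ni.1 = 0 then 0 else (Wxp * A ^ ((ni.1 : ℕ) - 1) * E) ni.2 i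

lemma blockRow_initialResponse {m : ℕ} (Wxp : Matrix (Fin nz) (Fin nx) ℝ)
    (E : Matrix (Fin nx) (Fin m) ℝ) (n : Fin (N + 1)) :
    blockRow (initialResponse N A Wxp E) n
      = if n = 0 then 0 else Wxp * A ^ ((n : ℕ) - 1) * E := by
  ext j i
  split_ifs with hn <;> simp [blockRow, initialResponse, hn]

lemma weighted_response_eq_blockRow {m : ℕ} (E : Matrix (Fin nx) (Fin m) ℝ)
    (Φs : (q : Fin P) → Matrix (Fin (N + 1) × Fin (nu q)) (Fin m) ℝ)
    (Φx : ℕ → Matrix (Fin nx) (Fin m) ℝ)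
    (hΦx0 : Φx 0 = 0) (hΦx1 : Φx 1 = E + ∑ q, B q * blockRow (Φs q) 0)
    (hΦxrec : ∀ n, ∀ _ : 1 ≤ n, ∀ _ : n ≤ N - 1,
      Φx (n + 1) = A * Φx n + ∑ q, B q * blockRow (Φs q) ⟨n, by omega⟩)
    (p : Fin P) (n : Fin (N + 1)) :
    Wx p * Φx n + Wu p * blockRow (Φs p) n
      = blockRow (∑ q, Hblk N A Wx Wu B p q * Φs q + initialResponse N A (Wx p) E) n := by
  rw [blockRow_add, blockRow_sum_Hblk_mul, blockRow_initialResponse]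
  rcases eq_or_ne n 0 with rfl | hn
  · simp [hΦx0]
  rw [eq_pow_mul_add_sum_of_recurrence A E Φx (fun k => ∑ q, B q * blockRow (Φs q) k) hΦx1
      hΦxrec (Fin.pos_iff_ne_zero.2 hn) n.is_le, if_neg hn,
    Matrix.mul_add, Matrix.mul_sum, Finset.sum_comm, ← Matrix.mul_assoc]
  have hterm : ∀ k : Fin (N + 1),
      (Wx p * if (k : ℕ) < n then A ^ ((n : ℕ) - 1 - k) * ∑ q, B q * blockRow (Φs q) k else 0)
        = ∑ q, if (k : ℕ) < n then Wx p * A ^ ((n : ℕ) - 1 - k) * B q * blockRow (Φs q) k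
          else 0 := by
    intro k
    split_ifs <;> simp [Matrix.mul_sum, Matrix.mul_assoc]
  simp only [hterm]
  abel

end SystemLevel

/-- Affine form of the system-level pseudo-gradient: the partial
gradient of `J^p` with respect to player `p`'s (stacked) input kernel is the affine map
`Φ_u ↦ 2 Σ_q (H^{pp})ᵀ H^{pq} Φ_u^q (W_w W_wᵀ) + h^p` with `h^p` a constant matrix
independent of `Φ_u`; the gradient is expressed through directional derivatives in the
Frobenius inner product. -/
theorem stmt14 {P nz nx m nw : ℕ} {nu : Fin P → ℕ} {N : ℕ} (hN : 1 ≤ N)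
    (A : Matrix (Fin nx) (Fin nx) ℝ)
    (B : (q : Fin P) → Matrix (Fin nx) (Fin (nu q)) ℝ)
    (E : Matrix (Fin nx) (Fin m) ℝ)
    (Wx : Fin P → Matrix (Fin nz) (Fin nx) ℝ)
    (Wu : (p : Fin P) → Matrix (Fin nz) (Fin (nu p)) ℝ)
    (Ww : Matrix (Fin m) (Fin nw) ℝ)
    (Φxf : ((q : Fin P) → Matrix (Fin (N + 1) × Fin (nu q)) (Fin m) ℝ) →
      ℕ → Matrix (Fin nx) (Fin m) ℝ)
    (hΦx0 : ∀ Φs, Φxf Φs 0 = 0)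
    (hΦx1 : ∀ Φs, Φxf Φs 1 = E + ∑ q, B q * blockRow (Φs q) 0)
    (hΦxrec : ∀ Φs n, ∀ _ : 1 ≤ n, ∀ _ : n ≤ N - 1,
      Φxf Φs (n + 1) = A * Φxf Φs n + ∑ q, B q * blockRow (Φs q) ⟨n, by omega⟩)
    (J : Fin P → ((q : Fin P) → Matrix (Fin (N + 1) × Fin (nu q)) (Fin m) ℝ) → ℝ)
    (hJ : ∀ p Φs, J p Φs = ∑ n : Fin (N + 1),
      Matrix.trace
        (((Wx p * Φxf Φs n + Wu p * blockRow (Φs p) n) * Ww)ᵀ *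
          ((Wx p * Φxf Φs n + Wu p * blockRow (Φs p) n) * Ww)))
    (p : Fin P) :
    ∃ hp : Matrix (Fin (N + 1) × Fin (nu p)) (Fin m) ℝ,
      ∀ (Φs : (q : Fin P) → Matrix (Fin (N + 1) × Fin (nu q)) (Fin m) ℝ)
        (V : Matrix (Fin (N + 1) × Fin (nu p)) (Fin m) ℝ),
        HasDerivAt (fun t : ℝ => J p (Function.update Φs p (Φs p + t • V)))
          (Matrix.trace
            ((((2 : ℝ) • ∑ q, (Hblk N A Wx Wu B p p)ᵀ * Hblk N A Wx Wu B p q *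
                Φs q * (Ww * Wwᵀ)) + hp)ᵀ * V)) 0 := by
  set H := Hblk N A Wx Wu B
  set G := initialResponse N A (Wx p) E
  refine ⟨(2 : ℝ) • ((H p p)ᵀ * G * (Ww * Wwᵀ)), fun Φs V => ?_⟩
  have hJ_stacked : ∀ Φs', J p Φs' = (((∑ q, H p q * Φs' q + G) * Ww)ᵀ *
      ((∑ q, H p q * Φs' q + G) * Ww)).trace := fun Φs' => by
    rw [hJ, trace_transpose_mul_eq_sum_blockRow]
    refine Finset.sum_congr rfl fun n _ => ?_
    rw [blockRow_mul, ← weighted_response_eq_blockRow N A Wx Wu B E Φs' (Φxf Φs') (hΦx0 Φs')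
      (hΦx1 Φs') (hΦxrec Φs')]
  set Z := ∑ q, H p q * Φs q + G
  have hline : (fun t : ℝ => J p (Function.update Φs p (Φs p + t • V)))
      = fun t => ((Z * Ww + t • (H p p * V * Ww))ᵀ * (Z * Ww + t • (H p p * V * Ww))).trace := by
    funext t
    rw [hJ_stacked, sum_mul_update_add, add_right_comm, Matrix.add_mul, Matrix.mul_smul,
      Matrix.smul_mul]
  have hgrad : (2 : ℝ) • ∑ q, (H p p)ᵀ * H p q * Φs q * (Ww * Wwᵀ)
      + (2 : ℝ) • ((H p p)ᵀ * G * (Ww * Wwᵀ)) = (2 : ℝ) • ((H p p)ᵀ * Z * (Ww * Wwᵀ)) := by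
    simp only [Z, Matrix.mul_add, Matrix.add_mul, Matrix.mul_sum, Matrix.sum_mul, smul_add,
      Matrix.mul_assoc]
  rw [hline, hgrad, Matrix.transpose_smul, Matrix.smul_mul, Matrix.trace_smul, smul_eq_mul,
    trace_transpose_mul_sandwich]
  exact hasDerivAt_trace_transpose_mul_self_add_smul _ _
end
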